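/- arXiv:math/0403467 — 9 statements merged into one kernel-verified Lean document; each statement's English description precedes it below -/
import Mathlib

section
/- Let A and B be real n×n stable matrices with A − B of rank one. Then there exist nonzero vectors v, w ∈ ℝⁿ with A·v·vᵀ + v·vᵀ·Aᵀ + B·w·wᵀ + w·wᵀ·Bᵀ = 0 if and only if the matrix A·B has a real negative eigenvalue, i.e. there exist a real λ < 0 and a nonzero x ∈ ℝⁿ with A·B·x = λ·x. -/
/-!
Write `a = A v` and `b = B w`, so that the equation says `a vᵀ + v aᵀ + b wᵀ + w bᵀ = 0`.
If `v` and `w` are linearly independent, testing this symmetric matrix against vectors dual to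
`v, w` forces `A v = β w` and `B w = -β v`, so `w` is an eigenvector of `A B` for `-β²`;
conversely an eigenvector `x` of `A B` for `-β²` gives such a pair with `v = -β⁻¹ B x`.
If instead `w = t v`, the equation collapses to `(A + t² B) v = 0`, which is impossible:
the characteristic polynomial of a stable matrix has no root in `[0, ∞)`, so `det A` and `det B`
both have the sign `(-1)ⁿ`; since `A - B` has rank one, the determinant is affine on the segment
from `B` to `A`, hence nonzero there, and `A + t² B` is a positive multiple of a point of it.
-/

open Matrix

/-- A real square matrix is *stable* if every eigenvalue (over ℂ) has negative real part. -/
def IsStable {n : ℕ} (A : Matrix (Fin n) (Fin n) ℝ) : Prop :=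
  ∀ μ : ℂ, μ ∈ spectrum ℂ (A.map (algebraMap ℝ ℂ)) → μ.re < 0

namespace Matrix

section Vectors

variable {ι K : Type*} [Fintype ι] [Field K] [LinearOrder K] [IsStrictOrderedRing K]

theorem eq_zero_of_vecMulVec_add_vecMulVec_eq_zero {u v : ι → K} (hv : v ≠ 0)
    (h : vecMulVec u v + vecMulVec v u = 0) : u = 0 := by
  have hvv : v ⬝ᵥ v ≠ 0 := fun h0 => hv (dotProduct_self_eq_zero.mp h0)
  have hz : (v ⬝ᵥ v) • u + (u ⬝ᵥ v) • v = 0 := by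
    simpa only [add_mulVec, vecMulVec_mulVec, op_smul_eq_smul, zero_mulVec]
      using congrArg (· *ᵥ v) h
  have huv : u ⬝ᵥ v = 0 := by
    have := congrArg (· ⬝ᵥ v) hz
    simp only [add_dotProduct, smul_dotProduct, smul_eq_mul, zero_dotProduct] at this
    have : (v ⬝ᵥ v) * (2 * (u ⬝ᵥ v)) = 0 := by linear_combination this
    simpa [hvv] using this
  rw [huv, zero_smul, add_zero, smul_eq_zero] at hz
  exact hz.resolve_left hvv

theorem add_smul_eq_zero_of_vecMulVec_add_vecMulVec_eq_zero {a b v : ι → K} (hv : v ≠ 0)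
    (t : K)
    (h : vecMulVec a v + vecMulVec v a + vecMulVec b (t • v) + vecMulVec (t • v) b = 0) :
    a + t • b = 0 := by
  refine eq_zero_of_vecMulVec_add_vecMulVec_eq_zero hv ?_
  rw [← h]
  simp only [add_vecMulVec, vecMulVec_add, smul_vecMulVec, vecMulVec_smul]
  abel

theorem exists_dotProduct_eq_zero_and_eq_one {v w : ι → K} (h : ∀ t : K, w ≠ t • v) :
    ∃ z, v ⬝ᵥ z = 0 ∧ w ⬝ᵥ z = 1 := by
  -- the component of `w` orthogonal to `v` (just `w` when `v = 0`, as then the quotient is `0`)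
  set z₀ := w - ((w ⬝ᵥ v) / (v ⬝ᵥ v)) • v
  have hvz₀ : v ⬝ᵥ z₀ = 0 := by
    rcases eq_or_ne v 0 with rfl | hv
    · exact zero_dotProduct _
    have hvv : v ⬝ᵥ v ≠ 0 := fun h0 => hv (dotProduct_self_eq_zero.mp h0)
    simp only [z₀, dotProduct_sub, dotProduct_smul, smul_eq_mul, dotProduct_comm v w]
    field_simp
    ring
  have hwz₀ : w ⬝ᵥ z₀ = z₀ ⬝ᵥ z₀ := by
    calc w ⬝ᵥ z₀ = w ⬝ᵥ z₀ - (w ⬝ᵥ v) / (v ⬝ᵥ v) * (v ⬝ᵥ z₀) := by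
          rw [hvz₀, mul_zero, sub_zero]
      _ = z₀ ⬝ᵥ z₀ := by simp only [z₀, sub_dotProduct, smul_dotProduct, smul_eq_mul]
  have hz₀ : z₀ ⬝ᵥ z₀ ≠ 0 := fun h0 =>
    h _ (sub_eq_zero.mp (dotProduct_self_eq_zero.mp h0))
  refine ⟨(z₀ ⬝ᵥ z₀)⁻¹ • z₀, ?_, ?_⟩
  · rw [dotProduct_smul, hvz₀, smul_zero]
  · rw [dotProduct_smul, hwz₀, smul_eq_mul, inv_mul_cancel₀ hz₀]

theorem exists_eq_smul_of_vecMulVec_add_vecMulVec_eq_zero {a b v w : ι → K} (hv : v ≠ 0)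
    (hvw : ∀ t : K, w ≠ t • v)
    (h : vecMulVec a v + vecMulVec v a + vecMulVec b w + vecMulVec w b = 0) :
    ∃ β : K, a = β • w ∧ b = -β • v := by
  have hwv : ∀ t : K, v ≠ t • w := by
    rintro t rfl
    have ht : t ≠ 0 := by rintro rfl; exact hv (zero_smul K w)
    exact hvw t⁻¹ (by rw [smul_smul, inv_mul_cancel₀ ht, one_smul])
  obtain ⟨z₁, hwz₁, hvz₁⟩ := exists_dotProduct_eq_zero_and_eq_one hwv
  obtain ⟨z₂, hvz₂, hwz₂⟩ := exists_dotProduct_eq_zero_and_eq_one hvw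
  have hz (z : ι → K) :
      (v ⬝ᵥ z) • a + (a ⬝ᵥ z) • v + (w ⬝ᵥ z) • b + (b ⬝ᵥ z) • w = 0 := by
    simpa only [add_mulVec, vecMulVec_mulVec, op_smul_eq_smul, zero_mulVec]
      using congrArg (· *ᵥ z) h
  have E₁ := hz z₁
  have E₂ := hz z₂
  simp only [hvz₁, hwz₁, hvz₂, hwz₂, one_smul, zero_smul, add_zero, zero_add] at E₁ E₂
  have h₁₁ := congrArg (· ⬝ᵥ z₁) E₁
  have h₂₁ := congrArg (· ⬝ᵥ z₁) E₂
  have h₂₂ := congrArg (· ⬝ᵥ z₂) E₂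
  simp only [add_dotProduct, smul_dotProduct, smul_eq_mul, zero_dotProduct, hvz₁, hwz₁, hvz₂,
    hwz₂] at h₁₁ h₂₁ h₂₂
  refine ⟨a ⬝ᵥ z₂, ?_, ?_⟩
  · linear_combination (norm := module) E₁ - (h₁₁ / 2) • v - h₂₁ • w
  · linear_combination (norm := module) E₂ - (h₂₂ / 2) • w

end Vectors

theorem vecMulVec_add_vecMulVec_eq_zero_of_eq_smul {ι R : Type*} [CommRing R] {a b v w : ι → R}
    {β : R} (ha : a = β • w) (hb : b = -β • v) :
    vecMulVec a v + vecMulVec v a + vecMulVec b w + vecMulVec w b = 0 := by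
  rw [ha, hb, smul_vecMulVec, vecMulVec_smul, smul_vecMulVec, vecMulVec_smul, neg_smul, neg_smul]
  abel

theorem exists_eq_vecMulVec_of_rank_le_one {m n K : Type*} [Fintype n] [DecidableEq n] [Field K]
    {M : Matrix m n K} (h : M.rank ≤ 1) : ∃ p q, M = vecMulVec p q := by
  unfold rank at h
  obtain ⟨p, hp⟩ := finrank_le_one_iff.mp h
  choose c hc using fun x => hp ⟨M.mulVecLin x, LinearMap.mem_range_self _ x⟩
  refine ⟨p, fun j => c (Pi.single j 1), ?_⟩
  ext i j
  have := congrFun (congrArg Subtype.val (hc (Pi.single j 1))) i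
  simp only [Submodule.coe_smul, Pi.smul_apply, smul_eq_mul, mulVecLin_apply,
    mulVec_single_one] at this
  rw [vecMulVec_apply, mul_comm, this, col_apply]

theorem exists_mulVec_eq_smul_of_mul_mulVec_eq_neg_smul {n : Type*} [Fintype n]
    {A B : Matrix n n ℝ} {lam : ℝ} {x : n → ℝ} (hlam : lam < 0)
    (hABx : (A * B) *ᵥ x = lam • x) :
    ∃ β : ℝ, β ≠ 0 ∧ ∃ y, A *ᵥ y = β • x ∧ B *ᵥ x = -β • y := by
  set β := √(-lam)
  have hβ : 0 < β := Real.sqrt_pos.mpr (neg_pos.mpr hlam)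
  have hββ : β * β = -lam := Real.mul_self_sqrt (neg_nonneg.mpr hlam.le)
  refine ⟨β, hβ.ne', (-β⁻¹) • B *ᵥ x, ?_, ?_⟩
  · rw [mulVec_smul, mulVec_mulVec, hABx, smul_smul]
    congr 1
    field_simp
    linarith
  · rw [smul_smul, neg_mul_neg, mul_inv_cancel₀ hβ.ne', one_smul]

section Determinant

variable {n R : Type*} [Fintype n] [DecidableEq n]

theorem det_add_vecMulVec [CommRing R] {B : Matrix n n R} (hB : IsUnit B.det) (p q : n → R) :
    (B + vecMulVec p q).det = B.det * (1 + q ⬝ᵥ (B⁻¹ *ᵥ p)) := by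
  rw [vecMulVec_eq Unit, det_add_replicateCol_mul_replicateRow hB, det_unique (n := Unit),
    Matrix.mul_assoc, ← replicateCol_mulVec]
  simp

theorem det_add_smul_vecMulVec [CommRing R] {B : Matrix n n R} (hB : IsUnit B.det)
    (p q : n → R) (τ : R) :
    (B + τ • vecMulVec p q).det = (1 - τ) * B.det + τ * (B + vecMulVec p q).det := by
  rw [← smul_vecMulVec, det_add_vecMulVec hB, det_add_vecMulVec hB, mulVec_smul, dotProduct_smul,
    smul_eq_mul]
  ring

variable {K : Type*} [Field K] [LinearOrder K] [IsStrictOrderedRing K]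

theorem det_add_smul_sub_ne_zero {A B : Matrix n n K} (h : (A - B).rank ≤ 1)
    (hpos : 0 < A.det * B.det) {τ : K} (hτ₀ : 0 ≤ τ) (hτ₁ : τ ≤ 1) :
    (B + τ • (A - B)).det ≠ 0 := by
  obtain ⟨p, q, hpq⟩ := exists_eq_vecMulVec_of_rank_le_one h
  have hB : IsUnit B.det := (right_ne_zero_of_mul hpos.ne').isUnit
  have hA : B + vecMulVec p q = A := by rw [← hpq, add_sub_cancel]
  rw [hpq, det_add_smul_vecMulVec hB, hA]
  intro h0
  rcases hτ₁.lt_or_eq with hτ₁ | rfl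
  · have hB2 := mul_self_pos.mpr hB.ne_zero
    have : (1 - τ) * (B.det * B.det) + τ * (A.det * B.det) = 0 := by linear_combination B.det * h0
    linarith [mul_pos (sub_pos.mpr hτ₁) hB2, mul_nonneg hτ₀ hpos.le]
  · simp only [sub_self, zero_mul, one_mul, zero_add] at h0
    simp [h0] at hpos

theorem det_add_smul_ne_zero {A B : Matrix n n K} (h : (A - B).rank ≤ 1)
    (hpos : 0 < A.det * B.det) {s : K} (hs : 0 ≤ s) : (A + s • B).det ≠ 0 := by
  have hs₁ : (1 + s) ≠ 0 := by positivity
  have : A + s • B = (1 + s) • (B + (1 + s)⁻¹ • (A - B)) := by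
    rw [smul_add, smul_smul, mul_inv_cancel₀ hs₁, one_smul]
    module
  rw [this, det_smul]
  exact mul_ne_zero (pow_ne_zero _ hs₁) (det_add_smul_sub_ne_zero h hpos (by positivity)
    (inv_le_one_of_one_le₀ (by linarith)))

end Determinant

end Matrix

theorem IsStable.zero_lt_det_neg {n : ℕ} {A : Matrix (Fin n) (Fin n) ℝ} (hA : IsStable A) :
    0 < (-A).det := by
  have hroots (y : ℝ) (hy : A.charpoly.IsRoot y) : y < 0 := by
    have := hA y (mem_spectrum_iff_isRoot_charpoly.mpr ?_)
    · simpa using this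
    rw [charpoly_map]
    exact hy.map
  have := Polynomial.zero_lt_eval_of_roots_lt_of_leadingCoeff_nonneg hroots
    (by rw [A.charpoly_monic.leadingCoeff]; exact zero_le_one)
  rwa [eval_charpoly, map_zero, zero_sub] at this

theorem IsStable.zero_lt_det_mul_det {n : ℕ} {A B : Matrix (Fin n) (Fin n) ℝ} (hA : IsStable A)
    (hB : IsStable B) : 0 < A.det * B.det := by
  have := mul_pos hA.zero_lt_det_neg hB.zero_lt_det_neg
  rwa [det_neg, det_neg, mul_mul_mul_comm, ← mul_pow, neg_one_mul, neg_neg, one_pow,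
    one_mul] at this

/-- For stable `A`, `B` with `A - B` of rank one: nonzero `v`, `w` with
`A·v·vᵀ + v·vᵀ·Aᵀ + B·w·wᵀ + w·wᵀ·Bᵀ = 0` exist iff `A·B` has a real negative eigenvalue. -/
theorem rank_one_intersection_iff_neg_eigenvalue {n : ℕ} (A B : Matrix (Fin n) (Fin n) ℝ)
    (hA : IsStable A) (hB : IsStable B) (hrank : (A - B).rank = 1) :
    (∃ (v w : Fin n → ℝ), v ≠ 0 ∧ w ≠ 0 ∧
        A * vecMulVec v v + vecMulVec v v * Aᵀ + B * vecMulVec w w + vecMulVec w w * Bᵀ = 0) ↔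
      ∃ lam : ℝ, lam < 0 ∧ ∃ x : Fin n → ℝ, x ≠ 0 ∧ (A * B).mulVec x = lam • x := by
  have hdet := hA.zero_lt_det_mul_det hB
  simp only [mul_vecMulVec, vecMulVec_mul, vecMul_transpose]
  constructor
  · rintro ⟨v, w, hv, hw, h⟩
    rcases em (∃ t : ℝ, w = t • v) with ⟨t, rfl⟩ | hvw
    · have hker := add_smul_eq_zero_of_vecMulVec_add_vecMulVec_eq_zero hv t h
      rw [mulVec_smul, smul_smul, ← smul_mulVec, ← add_mulVec] at hker
      exact absurd (exists_mulVec_eq_zero_iff.mp ⟨v, hv, hker⟩)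
        (det_add_smul_ne_zero hrank.le hdet (mul_self_nonneg t))
    · obtain ⟨β, hAv, hBw⟩ :=
        exists_eq_smul_of_vecMulVec_add_vecMulVec_eq_zero hv (not_exists.mp hvw) h
      have hβ : β ≠ 0 := by
        rintro rfl
        rw [zero_smul] at hAv
        exact left_ne_zero_of_mul hdet.ne' (exists_mulVec_eq_zero_iff.mp ⟨v, hv, hAv⟩)
      refine ⟨-(β * β), neg_neg_of_pos (mul_self_pos.mpr hβ), w, hw, ?_⟩
      rw [← mulVec_mulVec, hBw, mulVec_smul, hAv, smul_smul, neg_mul]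
  · rintro ⟨lam, hlam, x, hx, hABx⟩
    obtain ⟨β, hβ, y, hAy, hBx⟩ := exists_mulVec_eq_smul_of_mul_mulVec_eq_neg_smul hlam hABx
    refine ⟨y, x, ?_, hx, vecMulVec_add_vecMulVec_eq_zero_of_eq_smul hAy hBx⟩
    rintro rfl
    rw [mulVec_zero, eq_comm, smul_eq_zero] at hAy
    exact hAy.elim hβ hx
end

section
/- Let A and B be real n×n stable matrices with A − B of rank one. Then for every x ∈ [0,1] the convex combination (1−x)·A + x·B is invertible. -/
/-!
Stability forces `0 < det (-A)`: the characteristic polynomial of `A` is monic with no root in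
`[0, ∞)`, so it is positive at `0`, where its value is `det (-A)`. By the matrix determinant lemma
the determinant is affine along a rank-one direction, so `det (-((1 - x) • A + x • B))` is the
convex combination `(1 - x) * det (-A) + x * det (-B)` of two positive numbers.
-/

open Matrix

theorem Polynomial.Monic.eval_pos_of_forall_ge_ne_zero {p : Polynomial ℝ} (hp : p.Monic) {a : ℝ}
    (hroot : ∀ t, a ≤ t → p.eval t ≠ 0) : 0 < p.eval a := by
  by_cases hone : p = 1
  · simp [hone]
  have htop : Filter.Tendsto (fun t => p.eval t) Filter.atTop Filter.atTop :=
    p.tendsto_atTop_of_leadingCoeff_nonneg (hp.degree_pos.mpr hone) (by simp [hp.leadingCoeff])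
  by_contra! hneg
  obtain ⟨t, ht, hzero⟩ := intermediate_value_Ici p.continuous.continuousOn htop hneg
  exact hroot t ht hzero

theorem Matrix.exists_eq_vecMulVec_of_rank_le_one_s5 {K m n : Type*} [Field K] [Fintype n]
    (C : Matrix m n K) (h : C.rank ≤ 1) : ∃ u v, C = vecMulVec u v := by
  have := Module.Finite.span_of_finite K (Set.finite_range C.col)
  rw [rank_eq_finrank_span_cols, finrank_le_one_iff] at h
  obtain ⟨⟨u, _⟩, hu⟩ := h
  choose c hc using fun j => hu ⟨C.col j, Submodule.subset_span (Set.mem_range_self j)⟩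
  refine ⟨u, c, ?_⟩
  ext i j
  simpa [vecMulVec_apply, mul_comm] using (congrFun (congrArg Subtype.val (hc j)) i).symm

theorem Matrix.det_add_smul_vecMulVec_s5 {R m : Type*} [CommRing R] [Fintype m] [DecidableEq m]
    {M : Matrix m m R} (hM : IsUnit M.det) (u v : m → R) (t : R) :
    (M + t • vecMulVec u v).det = (1 - t) * M.det + t * (M + vecMulVec u v).det := by
  have hdet (s : R) : (M + s • vecMulVec u v).det =
      M.det * (1 + s * (replicateRow Unit v * M⁻¹ * replicateCol Unit u) () ()) := by
    rw [← smul_vecMulVec, vecMulVec_eq Unit, det_add_replicateCol_mul_replicateRow hM,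
      det_unique (1 + _ : Matrix Unit Unit R)]
    simp [Matrix.mul_smul]
  have hone := hdet 1
  rw [one_smul] at hone
  rw [hdet, hone]
  ring

namespace IsStable

variable {n : ℕ} {A : Matrix (Fin n) (Fin n) ℝ}

theorem charpoly_eval_ne_zero (hA : IsStable A) {t : ℝ} (ht : 0 ≤ t) :
    A.charpoly.eval t ≠ 0 := by
  intro hroot
  have hspec : (t : ℂ) ∈ spectrum ℂ (A.map (algebraMap ℝ ℂ)) := by
    refine mem_spectrum_of_isRoot_charpoly ?_
    rw [charpoly_map, Polynomial.IsRoot, Polynomial.eval_map_algebraMap, ← Complex.coe_algebraMap,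
      Polynomial.aeval_algebraMap_apply_eq_algebraMap_eval, hroot, map_zero]
  have hre := hA _ hspec
  rw [Complex.ofReal_re] at hre
  linarith

theorem det_neg_pos (hA : IsStable A) : 0 < (-A).det := by
  have := (charpoly_monic A).eval_pos_of_forall_ge_ne_zero fun t ht => hA.charpoly_eval_ne_zero ht
  rwa [eval_charpoly, scalar_apply, diagonal_zero, zero_sub] at this

end IsStable

/-- For stable `A`, `B` with `A - B` of rank one, every convex combination
`(1−x)·A + x·B` for `x ∈ [0,1]` is invertible. -/
theorem convex_combination_invertible {n : ℕ} (A B : Matrix (Fin n) (Fin n) ℝ)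
    (hA : IsStable A) (hB : IsStable B) (hrank : (A - B).rank = 1) :
    ∀ x : ℝ, 0 ≤ x → x ≤ 1 → IsUnit ((1 - x) • A + x • B) := by
  intro x hx0 hx1
  obtain ⟨u, v, huv⟩ := (A - B).exists_eq_vecMulVec_of_rank_le_one_s5 hrank.le
  have hsegment : -((1 - x) • A + x • B) = -A + x • vecMulVec u v := by
    rw [← huv]; module
  have hendpoint : -B = -A + vecMulVec u v := by
    rw [← huv]; abel
  have hdet : (-((1 - x) • A + x • B)).det = (1 - x) * (-A).det + x * (-B).det := by
    rw [hsegment, hendpoint, det_add_smul_vecMulVec_s5 hA.det_neg_pos.ne'.isUnit]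
  have hpos : 0 < (-((1 - x) • A + x • B)).det :=
    hdet ▸ convex_Ioi (0 : ℝ) hA.det_neg_pos hB.det_neg_pos (sub_nonneg.2 hx1) hx0
      (sub_add_cancel 1 x)
  rw [← IsUnit.neg_iff, isUnit_iff_isUnit_det]
  exact hpos.ne'.isUnit
end

section
/- Let A be a real n×n matrix and x ∈ ℝⁿ a vector such that the vectors x, A·x, A²·x, …, A^{n−1}·x are linearly independent (i.e. the pair (A, x) is completely controllable). Then there exists an invertible real n×n matrix R and a vector h ∈ ℝⁿ such that R·x = g and R·A·R⁻¹ = S + g·hᵀ, i.e. R·A·R⁻¹ is in companion form. -/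
open Matrix

/-- The `n × n` shift matrix `S` with `S_{i,i+1} = 1` and all other entries `0`. -/
def Smat (n : ℕ) : Matrix (Fin n) (Fin n) ℝ :=
  Matrix.of fun i j => if (i : ℕ) + 1 = (j : ℕ) then 1 else 0

/-- The last standard basis vector `g` of `ℝⁿ`. -/
def gvec (n : ℕ) : Fin n → ℝ := fun i => if (i : ℕ) = n - 1 then 1 else 0

/-!
Let `χ` be the characteristic polynomial of `A` and let `p_j = (χ div X^(j+1))(A) x` be the
vectors of Horner's scheme for `χ(A) x`. Then `p_(n-1) = x`, `A p_j = p_(j-1) - χ_j x` for `j ≥ 1`,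
and `A p_0 = χ(A) x - χ_0 x = -χ_0 x` by Cayley–Hamilton. So the matrix `P` with columns `p_j`
satisfies `A P = P (S + g hᵀ)` and `P g = x` with `h_j = -χ_j`. The range of `P` is then
`A`-invariant and contains `x`, hence contains every `A^k x`; by controllability `P` is invertible,
and `R = P⁻¹`.
-/

open Polynomial

namespace Polynomial

variable {R : Type*} [CommRing R]

theorem coeff_divX_iterate (p : R[X]) (k i : ℕ) : (divX^[k] p).coeff i = p.coeff (i + k) := by
  induction k generalizing p with
  | zero => rfl
  | succ k ih => rw [Function.iterate_succ_apply, ih, coeff_divX, Nat.add_assoc]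

theorem Monic.divX_iterate_natDegree {p : R[X]} (hp : p.Monic) : divX^[p.natDegree] p = 1 := by
  ext i
  rw [coeff_divX_iterate, coeff_one]
  rcases i with _ | i
  · simpa using hp.leadingCoeff
  · rw [if_neg i.succ_ne_zero, coeff_eq_zero_of_natDegree_lt (by omega)]

end Polynomial

section Horner

variable {R : Type*} [CommRing R]

theorem Matrix.mulVec_aeval_divX {n : Type*} [Fintype n] [DecidableEq n]
    (A : Matrix n n R) (p : R[X]) (x : n → R) :
    A *ᵥ (aeval A (divX p) *ᵥ x) = aeval A p *ᵥ x - p.coeff 0 • x := by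
  nth_rw 2 [← X_mul_divX_add p]
  rw [map_add, map_mul, aeval_X, aeval_C, add_mulVec, ← mulVec_mulVec,
    Algebra.algebraMap_eq_smul_one, smul_mulVec, one_mulVec, add_sub_cancel_right]

noncomputable def hornerMatrix {n : ℕ} (A : Matrix (Fin n) (Fin n) R) (p : R[X])
    (x : Fin n → R) : Matrix (Fin n) (Fin n) R :=
  Matrix.of fun i j => (aeval A (divX^[(j : ℕ) + 1] p) *ᵥ x) i

end Horner

theorem isUnit_det_of_intertwines_controllable {K : Type*} [Field K] {n : ℕ}
    {A P M : Matrix (Fin n) (Fin n) K} {x g : Fin n → K}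
    (hctrl : LinearIndependent K fun i : Fin n => (A ^ (i : ℕ)) *ᵥ x)
    (hAP : A * P = P * M) (hPg : P *ᵥ g = x) : IsUnit P.det := by
  have hkrylov : ∀ k : ℕ, A ^ k *ᵥ x = P *ᵥ (M ^ k *ᵥ g) := fun k => by
    rw [mulVec_mulVec, (SemiconjBy.pow_right hAP.symm k).eq, ← mulVec_mulVec, hPg]
  have hrange : Submodule.span K (Set.range fun i : Fin n => A ^ (i : ℕ) *ᵥ x)
      ≤ LinearMap.range P.mulVecLin :=
    Submodule.span_le.2 <| by
      rintro _ ⟨i, rfl⟩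
      exact ⟨_, (hkrylov i).symm⟩
  rw [hctrl.span_eq_top_of_card_eq_finrank' (by simp), top_le_iff, LinearMap.range_eq_top,
    coe_mulVecLin, mulVec_surjective_iff_isUnit] at hrange
  exact (isUnit_iff_isUnit_det P).1 hrange

theorem gvec_succ (m : ℕ) : gvec (m + 1) = Pi.single (Fin.last m) 1 := by
  ext i
  simp [gvec, Pi.single_apply, Fin.ext_iff]

theorem mul_Smat_apply_zero {m : ℕ} (B : Matrix (Fin (m + 1)) (Fin (m + 1)) ℝ)
    (i : Fin (m + 1)) : (B * Smat (m + 1)) i 0 = 0 := by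
  simp [mul_apply, Smat]

theorem mul_Smat_apply_succ {m : ℕ} (B : Matrix (Fin (m + 1)) (Fin (m + 1)) ℝ)
    (i : Fin (m + 1)) (j : Fin m) : (B * Smat (m + 1)) i j.succ = B i j.castSucc := by
  simp only [mul_apply, Smat, of_apply, Fin.val_succ, add_left_inj, mul_ite, mul_one, mul_zero]
  rw [← Fin.val_castSucc j]
  simp only [Fin.val_inj, Finset.sum_ite_eq', Finset.mem_univ, if_true]

theorem hornerMatrix_mulVec_gvec {m : ℕ} (A : Matrix (Fin (m + 1)) (Fin (m + 1)) ℝ)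
    (x : Fin (m + 1) → ℝ) {p : ℝ[X]} (hp : p.Monic) (hdeg : p.natDegree = m + 1) :
    hornerMatrix A p x *ᵥ gvec (m + 1) = x := by
  ext i
  rw [gvec_succ, mulVec_single_one]
  change (aeval A (divX^[m + 1] p) *ᵥ x) i = x i
  have hone : divX^[m + 1] p = 1 := hdeg ▸ hp.divX_iterate_natDegree
  rw [hone, map_one, one_mulVec]

theorem mul_hornerMatrix {m : ℕ} (A : Matrix (Fin (m + 1)) (Fin (m + 1)) ℝ)
    (x : Fin (m + 1) → ℝ) {p : ℝ[X]} (hp : aeval A p *ᵥ x = 0) :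
    A * hornerMatrix A p x
      = hornerMatrix A p x * Smat (m + 1) + vecMulVec x (fun j : Fin (m + 1) => -p.coeff j) := by
  ext i j
  have hcol : (A * hornerMatrix A p x) i j = (A *ᵥ (aeval A (divX^[(j : ℕ) + 1] p) *ᵥ x)) i :=
    rfl
  rw [Matrix.add_apply, vecMulVec_apply, hcol, Function.iterate_succ_apply', mulVec_aeval_divX,
    coeff_divX_iterate, zero_add]
  cases j using Fin.cases with
  | zero => simp [mul_Smat_apply_zero, hp, mul_comm]
  | succ t =>
    rw [mul_Smat_apply_succ]
    simp [hornerMatrix, sub_eq_add_neg, mul_comm]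


theorem controllable_to_companion_form_general {n : ℕ}
    (A : Matrix (Fin n) (Fin n) ℝ) (x : Fin n → ℝ)
    (hctrl : LinearIndependent ℝ (fun i : Fin n => (A ^ (i : ℕ)).mulVec x)) :
    ∃ (R : Matrix (Fin n) (Fin n) ℝ) (h : Fin n → ℝ),
      IsUnit R.det ∧ R.mulVec x = gvec n ∧ R * A * R⁻¹ = Smat n + vecMulVec (gvec n) h := by
  rcases n with _ | m
  · exact ⟨1, 0, by simp, Subsingleton.elim _ _, Subsingleton.elim _ _⟩
  set P := hornerMatrix A A.charpoly x
  have hPg : P *ᵥ gvec (m + 1) = x :=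
    hornerMatrix_mulVec_gvec A x A.charpoly_monic (A.charpoly_natDegree_eq_dim.trans (by simp))
  set h : Fin (m + 1) → ℝ := fun j => -A.charpoly.coeff j
  have hAP : A * P = P * (Smat (m + 1) + vecMulVec (gvec (m + 1)) h) := by
    rw [mul_add, mul_vecMulVec, hPg]
    exact mul_hornerMatrix A x (by rw [aeval_self_charpoly, zero_mulVec])
  have hP : IsUnit P.det := isUnit_det_of_intertwines_controllable hctrl hAP hPg
  refine ⟨P⁻¹, h, isUnit_nonsing_inv_det_iff.2 hP, ?_, ?_⟩
  · rw [← hPg, mulVec_mulVec, nonsing_inv_mul _ hP, one_mulVec]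
  · rw [nonsing_inv_nonsing_inv _ hP, mul_assoc, hAP, ← mul_assoc, nonsing_inv_mul _ hP, one_mul]

/-- If `(A, x)` is completely controllable, then some change of basis `R` sends `x` to `g`
and puts `A` into companion form `S + g·hᵀ`. -/
theorem controllable_to_companion_form {n : ℕ} (hn : 0 < n)
    (A : Matrix (Fin n) (Fin n) ℝ) (x : Fin n → ℝ)
    (hctrl : LinearIndependent ℝ (fun i : Fin n => (A ^ (i : ℕ)).mulVec x)) :
    ∃ (R : Matrix (Fin n) (Fin n) ℝ) (h : Fin n → ℝ),
      IsUnit R.det ∧ R.mulVec x = gvec n ∧ R * A * R⁻¹ = Smat n + vecMulVec (gvec n) h :=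
  controllable_to_companion_form_general A x hctrl
end

section
/- Let Z be a real symmetric n×n matrix. Then Π·S·Z·Π + Π·Z·Sᵀ·Π = 0 holds if and only if there exist real numbers z₀, z₁, …, z_{n−1} such that (with 1-based indexing) Z_{ij} = 0 whenever i+j is odd, and Z_{ij} = (−1)^{(i−j)/2} · z_{(i+j−2)/2} whenever i+j is even. -/
open Matrix

/-- `Π = I − g·gᵀ`, the orthogonal projection onto the orthogonal complement of `g`. -/
def Pimat (n : ℕ) : Matrix (Fin n) (Fin n) ℝ := 1 - vecMulVec (gvec n) (gvec n)

lemma Pi_diag (n : ℕ) :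
    Pimat n = Matrix.diagonal (fun i : Fin n => if (i:ℕ) = n-1 then (0:ℝ) else 1) := by
  ext i j
  by_cases hij : i = j
  · subst hij
    simp [Pimat, gvec, Matrix.one_apply, vecMulVec_apply]
    split_ifs <;> simp_all
  · have hval : (i:ℕ) ≠ (j:ℕ) := fun h => hij (Fin.ext h)
    simp [Pimat, gvec, Matrix.one_apply, Matrix.diagonal_apply_ne _ hij, hij, vecMulVec_apply]
    intro h1 h2
    exact hval (h2.trans h1.symm)

variable {n : ℕ}

lemma SZ_apply (Z : Matrix (Fin n) (Fin n) ℝ) (i j : Fin n) :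
    (Smat n * Z) i j = if h : (i:ℕ)+1 < n then Z ⟨(i:ℕ)+1, h⟩ j else 0 := by
  rw [Matrix.mul_apply]
  split_ifs with h
  · rw [Finset.sum_eq_single (⟨(i:ℕ)+1, h⟩ : Fin n)]
    · simp [Smat]
    · intro k _ hk
      have : ¬((i:ℕ)+1 = (k:ℕ)) := fun hik => hk (Fin.ext hik.symm)
      simp [Smat, this]
    · simp
  · apply Finset.sum_eq_zero
    intro k _
    have : ¬((i:ℕ)+1 = (k:ℕ)) := fun hik => h (hik ▸ k.isLt)
    simp [Smat, this]

lemma ZST_apply (Z : Matrix (Fin n) (Fin n) ℝ) (i j : Fin n) :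
    (Z * (Smat n)ᵀ) i j = if h : (j:ℕ)+1 < n then Z i ⟨(j:ℕ)+1, h⟩ else 0 := by
  rw [Matrix.mul_apply]
  split_ifs with h
  · rw [Finset.sum_eq_single (⟨(j:ℕ)+1, h⟩ : Fin n)]
    · simp [Smat]
    · intro k _ hk
      have : ¬((j:ℕ)+1 = (k:ℕ)) := fun hjk => hk (Fin.ext hjk.symm)
      simp [Smat, this]
    · simp
  · apply Finset.sum_eq_zero
    intro k _
    have : ¬((j:ℕ)+1 = (k:ℕ)) := fun hjk => h (hjk ▸ k.isLt)
    simp [Smat, this]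

lemma cond_iff (Z : Matrix (Fin n) (Fin n) ℝ) :
    Pimat n * Smat n * Z * Pimat n + Pimat n * Z * (Smat n)ᵀ * Pimat n = 0 ↔
    ∀ i j : ℕ, ∀ (hi : i+1 < n) (hj : j+1 < n),
      Z ⟨i+1, hi⟩ ⟨j, Nat.lt_of_succ_lt hj⟩ + Z ⟨i, Nat.lt_of_succ_lt hi⟩ ⟨j+1, hj⟩ = 0 := by
  have hd : ∀ (A : Matrix (Fin n) (Fin n) ℝ) (i j : Fin n),
      (Pimat n * A * Pimat n) i j
        = (if (i:ℕ) = n-1 then (0:ℝ) else 1) * A i j * (if (j:ℕ) = n-1 then (0:ℝ) else 1) := by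
    intro A i j
    rw [Pi_diag, Matrix.mul_diagonal, Matrix.diagonal_mul]
  constructor
  · intro h i j hi hj
    have hi' : (i : ℕ) < n := Nat.lt_of_succ_lt hi
    have hj' : (j : ℕ) < n := Nat.lt_of_succ_lt hj
    have h0 := congrFun (congrFun h ⟨i, hi'⟩) ⟨j, hj'⟩
    rw [Matrix.add_apply, Matrix.zero_apply, mul_assoc (Pimat n) (Smat n) Z, mul_assoc (Pimat n) Z (Smat n)ᵀ, hd, hd,
      SZ_apply, ZST_apply] at h0
    simp only [Fin.val_mk] at h0
    rw [dif_pos hi, dif_pos hj, if_neg (by omega : ¬ i = n-1), if_neg (by omega : ¬ j = n-1)] at h0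
    linarith [h0]
  · intro h
    ext i j
    rw [Matrix.add_apply, Matrix.zero_apply, mul_assoc (Pimat n) (Smat n) Z, mul_assoc (Pimat n) Z (Smat n)ᵀ, hd, hd,
      SZ_apply, ZST_apply]
    by_cases hi : (i:ℕ) = n-1
    · simp [hi]
    · by_cases hj : (j:ℕ) = n-1
      · simp [hj]
      · have hi1 : (i:ℕ)+1 < n := by omega
        have hj1 : (j:ℕ)+1 < n := by omega
        rw [dif_pos hi1, dif_pos hj1, if_neg hi, if_neg hj]
        have := h i j hi1 hj1
        simp only [Fin.eta] at this ⊢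
        linarith [this]

lemma neg_one_pow_congr' {a b : ℕ} (h : a % 2 = b % 2) : (-1:ℝ)^a = (-1:ℝ)^b := by
  rcases Nat.even_or_odd a with ha | ha
  · have h0 := Nat.even_iff.1 ha
    rw [ha.neg_one_pow, (Nat.even_iff.2 (by omega : b % 2 = 0)).neg_one_pow]
  · have h0 := Nat.odd_iff.1 ha
    rw [ha.neg_one_pow, (Nat.odd_iff.2 (by omega : b % 2 = 1)).neg_one_pow]

lemma neg_one_pow_nat {a b : ℕ} (h : (a+b) % 2 = 1) : (-1:ℝ)^a = -(-1:ℝ)^b := by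
  rcases Nat.even_or_odd a with ha | ha
  · have h0 := Nat.even_iff.1 ha
    rw [ha.neg_one_pow, (Nat.odd_iff.2 (by omega : b % 2 = 1)).neg_one_pow]
    ring
  · have h0 := Nat.odd_iff.1 ha
    rw [ha.neg_one_pow, (Nat.even_iff.2 (by omega : b % 2 = 0)).neg_one_pow]

lemma main_aux (hn : 0 < n) (W : ℕ → ℕ → ℝ)
    (hsym : ∀ a b, a < n → b < n → W a b = W b a)
    (hC : ∀ a b, a+1 < n → b+1 < n → W (a+1) b + W a (b+1) = 0) :
    ∃ z : ℕ → ℝ, ∀ a b, a < n → b < n →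
      ((a+b) % 2 = 1 → W a b = 0) ∧
      ((a+b) % 2 = 0 → W a b = (-1:ℝ)^(((a:ℤ)-(b:ℤ))/2) * z ((a+b)/2)) := by
  have stepT : ∀ t a b, a + t < n → t ≤ b → b < n → W (a+t) (b-t) = (-1:ℝ)^t * W a b := by
    intro t
    induction t with
    | zero => intro a b _ _ _; simp
    | succ t ih =>
      intro a b ha ht hb
      have h1 := hC (a+t) (b-(t+1)) (by omega) (by omega)
      have e : b - (t+1) + 1 = b - t := by omega
      rw [e] at h1
      have h2 := ih a b (by omega) (by omega) hb
      have e2 : a + (t+1) = (a+t)+1 := by omega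
      rw [e2, pow_succ]
      linarith [h1, h2]
  set c : ℕ → ℝ := fun s => if s < n then W 0 s else (-1:ℝ)^(s+1-n) * W (s+1-n) (n-1) with hc
  have K : ∀ a b, a < n → b < n → W a b = (-1:ℝ)^a * c (a+b) := by
    intro a b ha hb
    by_cases hs : a + b < n
    · have h1 := stepT a 0 (a+b) (by omega) (by omega) hs
      rw [show a + b - a = b by omega, show 0 + a = a by omega] at h1
      rw [h1]
      simp only [hc, if_pos hs]
    · have h1 := stepT (a - (a+b+1-n)) (a+b+1-n) (n-1) (by omega) (by omega) (by omega)
      rw [show (a+b+1-n) + (a - (a+b+1-n)) = a by omega,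
          show n - 1 - (a - (a+b+1-n)) = b by omega] at h1
      rw [h1]
      simp only [hc, if_neg hs]
      rw [← mul_assoc, ← pow_add]
      congr 1
      exact neg_one_pow_congr' (by omega)
  refine ⟨fun m => (-1:ℝ)^m * c (2*m), ?_⟩
  intro a b ha hb
  constructor
  · intro hodd
    have hsgn : (-1:ℝ)^a = -(-1:ℝ)^b := neg_one_pow_nat hodd
    have h1 := K a b ha hb
    have h2 := K b a hb ha
    rw [Nat.add_comm b a] at h2
    rw [hsym a b ha hb, h2, hsgn] at h1
    rw [K a b ha hb, hsgn]
    linarith [h1]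
  · intro heven
    simp only []
    rw [K a b ha hb, show 2 * ((a+b)/2) = a + b by omega]
    have key : (-1:ℝ)^(((a:ℤ)-(b:ℤ))/2) * (-1:ℝ)^((a+b)/2) = (-1:ℝ)^a := by
      rw [← zpow_natCast (-1:ℝ) ((a+b)/2), ← zpow_add₀ (by norm_num : (-1:ℝ) ≠ 0),
          ← zpow_natCast (-1:ℝ) a]
      congr 1
      omega
    rw [← key]
    ring

lemma conv_aux (W : ℕ → ℕ → ℝ)
    (h : ∃ z : ℕ → ℝ, ∀ a b, a < n → b < n →
      ((a+b) % 2 = 1 → W a b = 0) ∧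
      ((a+b) % 2 = 0 → W a b = (-1:ℝ)^(((a:ℤ)-(b:ℤ))/2) * z ((a+b)/2))) :
    ∀ a b, a+1 < n → b+1 < n → W (a+1) b + W a (b+1) = 0 := by
  obtain ⟨z, hz⟩ := h
  intro a b ha hb
  by_cases hp : (a+1+b) % 2 = 1
  · rw [(hz (a+1) b ha (by omega)).1 hp, (hz a (b+1) (by omega) hb).1 (by omega)]
    ring
  · have hp0 : (a+1+b) % 2 = 0 := by omega
    rw [(hz (a+1) b ha (by omega)).2 hp0, (hz a (b+1) (by omega) hb).2 (by omega)]
    rw [show (a+(b+1))/2 = (a+1+b)/2 by omega]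
    have he : (((a+1:ℕ):ℤ) - (b:ℤ))/2 = ((a:ℤ) - ((b+1:ℕ):ℤ))/2 + 1 := by
      push_cast
      omega
    rw [he, zpow_add₀ (by norm_num : (-1:ℝ) ≠ 0), zpow_one]
    ring

/-- A symmetric matrix `Z` satisfies `Π·S·Z·Π + Π·Z·Sᵀ·Π = 0` iff it has the signed Hankel
form: in 1-based indexing, `Z_{ij} = 0` for `i+j` odd, and
`Z_{ij} = (−1)^{(i−j)/2} z_{(i+j−2)/2}` for `i+j` even. (Below indices are 0-based, so the
conditions read `i+j` odd resp. even in 0-based indices as well.) -/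
theorem hankel_characterization {n : ℕ} (hn : 0 < n)
    (Z : Matrix (Fin n) (Fin n) ℝ) (hZ : Z.IsSymm) :
    Pimat n * Smat n * Z * Pimat n + Pimat n * Z * (Smat n)ᵀ * Pimat n = 0 ↔
      ∃ z : ℕ → ℝ, ∀ i j : Fin n,
        (((i : ℕ) + (j : ℕ)) % 2 = 1 → Z i j = 0) ∧
        (((i : ℕ) + (j : ℕ)) % 2 = 0 →
          Z i j = (-1 : ℝ) ^ (((i : ℤ) - (j : ℤ)) / 2) * z (((i : ℕ) + (j : ℕ)) / 2)) := by
  rw [cond_iff Z]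
  set W : ℕ → ℕ → ℝ := fun a b => if h : a < n ∧ b < n then Z ⟨a, h.1⟩ ⟨b, h.2⟩ else 0 with hW
  have hWmk : ∀ a b (ha : a < n) (hb : b < n), W a b = Z ⟨a, ha⟩ ⟨b, hb⟩ := by
    intro a b ha hb
    simp only [hW]
    rw [dif_pos (⟨ha, hb⟩ : a < n ∧ b < n)]
  have hWZ : ∀ (i j : Fin n), W (i:ℕ) (j:ℕ) = Z i j := by
    intro i j
    rw [hWmk _ _ i.isLt j.isLt]
  have hsym : ∀ a b, a < n → b < n → W a b = W b a := by
    intro a b ha hb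
    rw [hWmk a b ha hb, hWmk b a hb ha]
    have h1 := congrFun (congrFun hZ ⟨a, ha⟩) ⟨b, hb⟩
    simpa [Matrix.transpose_apply] using h1.symm
  constructor
  · intro h
    obtain ⟨z, hz⟩ := main_aux hn W hsym (by
      intro a b ha hb
      rw [hWmk (a+1) b ha (by omega), hWmk a (b+1) (by omega) hb]
      exact h a b ha hb)
    refine ⟨z, fun i j => ?_⟩
    have h2 := hz i j i.isLt j.isLt
    rw [hWZ i j] at h2
    exact h2
  · rintro ⟨z, hz⟩
    have hzW : ∀ a b, a < n → b < n →
        ((a+b) % 2 = 1 → W a b = 0) ∧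
        ((a+b) % 2 = 0 → W a b = (-1:ℝ)^(((a:ℤ)-(b:ℤ))/2) * z ((a+b)/2)) := by
      intro a b ha hb
      rw [hWmk a b ha hb]
      exact hz ⟨a, ha⟩ ⟨b, hb⟩
    intro a b ha hb
    have h3 := conv_aux W ⟨z, hzW⟩ a b ha hb
    rw [hWmk (a+1) b ha (by omega), hWmk a (b+1) (by omega) hb] at h3
    exact h3
end

section
/- Let A = S + g·hᵀ and B = S + g·kᵀ be real n×n matrices in companion form. Suppose Z is a real symmetric positive semidefinite n×n matrix and w ∈ ℝⁿ satisfy: (i) Π·S·Z·Π + Π·Z·Sᵀ·Π = 0; (ii) S·Z·g + Z·h + ⟨w, k−h⟩·w = 0; and (iii) Z − w·wᵀ is positive semidefinite. Then the matrices X' = Z − w·wᵀ and Y' = w·wᵀ are positive semidefinite and satisfy A·X' + X'·Aᵀ + B·Y' + Y'·Bᵀ = 0. -/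
open Matrix

/-! With `W = w wᵀ`, the left-hand side collapses to `S Z + Z Sᵀ + g vᵀ + v gᵀ` where
`v = Z h + ⟨w, k − h⟩ w`: the terms `S W + W Sᵀ` cancel, and the rank-one parts `g hᵀ`, `g kᵀ`
of `A` and `B` only enter through `v`. By (ii), `v = −S Z g`, so the expression is
`S Z Π + Π Z Sᵀ`, which is (i) because `Π S = S` (the last row of `S` vanishes). -/

section VecMulVec

variable {ι R : Type*} [Fintype ι] [CommRing R]

theorem add_vecMulVec_mul_add_mul_transpose (M X : Matrix ι ι R) (u v : ι → R) :
    (M + vecMulVec u v) * X + X * (M + vecMulVec u v)ᵀ =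
      M * X + X * Mᵀ + vecMulVec u (v ᵥ* X) + vecMulVec (X *ᵥ v) u := by
  rw [transpose_add, transpose_vecMulVec, add_mul, mul_add, vecMulVec_mul, mul_vecMulVec]
  abel

theorem mul_one_sub_vecMulVec_add [DecidableEq ι] (M : Matrix ι ι R) (g : ι → R) :
    M * (1 - vecMulVec g g) + (1 - vecMulVec g g) * Mᵀ =
      M + Mᵀ - vecMulVec g (M *ᵥ g) - vecMulVec (M *ᵥ g) g := by
  rw [mul_sub, sub_mul, mul_vecMulVec, vecMulVec_mul, vecMul_transpose]
  simp only [mul_one, one_mul]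
  abel

theorem lyapunov_sum_add_vecMulVec (M Z : Matrix ι ι R) (hZ : Zᵀ = Z) (u a b w : ι → R) :
    (M + vecMulVec u a) * (Z - vecMulVec w w) + (Z - vecMulVec w w) * (M + vecMulVec u a)ᵀ +
        (M + vecMulVec u b) * vecMulVec w w + vecMulVec w w * (M + vecMulVec u b)ᵀ =
      M * Z + Z * Mᵀ + vecMulVec u (Z *ᵥ a + (w ⬝ᵥ (b - a)) • w) +
        vecMulVec (Z *ᵥ a + (w ⬝ᵥ (b - a)) • w) u := by
  have hZa : a ᵥ* Z = Z *ᵥ a := by rw [← vecMul_transpose, hZ]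
  rw [add_assoc _ ((M + vecMulVec u b) * _), add_vecMulVec_mul_add_mul_transpose,
    add_vecMulVec_mul_add_mul_transpose]
  simp only [vecMul_sub, sub_mulVec, vecMul_vecMulVec, vecMulVec_mulVec, op_smul_eq_smul, hZa,
    vecMulVec_add, add_vecMulVec, vecMulVec_sub, sub_vecMulVec, vecMulVec_smul, smul_vecMulVec,
    dotProduct_sub, dotProduct_comm a w, dotProduct_comm b w, sub_smul, mul_sub, sub_mul]
  module

end VecMulVec

theorem gvec_vecMul_Smat (n : ℕ) : gvec n ᵥ* Smat n = 0 := by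
  ext j
  simp only [vecMul, dotProduct, gvec, Smat, of_apply, Pi.zero_apply]
  refine Finset.sum_eq_zero fun i _ => ?_
  have := i.isLt
  have := j.isLt
  split_ifs <;> first | omega | simp

theorem Pimat_mul_Smat (n : ℕ) : Pimat n * Smat n = Smat n := by
  rw [Pimat, sub_mul, vecMulVec_mul, gvec_vecMul_Smat, vecMulVec_zero, one_mul, sub_zero]

theorem Smat_transpose_mul_Pimat (n : ℕ) : (Smat n)ᵀ * Pimat n = (Smat n)ᵀ := by
  rw [Pimat, mul_sub, mul_vecMulVec, mulVec_transpose, gvec_vecMul_Smat, zero_vecMulVec, mul_one,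
    sub_zero]

theorem Z_w_solution_gives_XY_general {n : ℕ} (h k : Fin n → ℝ)
    (Z : Matrix (Fin n) (Fin n) ℝ) (w : Fin n → ℝ)
    (hZ : Z.PosSemidef)
    (h1 : Pimat n * Smat n * Z * Pimat n + Pimat n * Z * (Smat n)ᵀ * Pimat n = 0)
    (h2 : (Smat n * Z).mulVec (gvec n) + Z.mulVec h + (w ⬝ᵥ (k - h)) • w = 0)
    (h3 : (Z - vecMulVec w w).PosSemidef) :
    (Z - vecMulVec w w).PosSemidef ∧ (vecMulVec w w).PosSemidef ∧
      (Smat n + vecMulVec (gvec n) h) * (Z - vecMulVec w w) +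
        (Z - vecMulVec w w) * (Smat n + vecMulVec (gvec n) h)ᵀ +
        (Smat n + vecMulVec (gvec n) k) * vecMulVec w w +
        vecMulVec w w * (Smat n + vecMulVec (gvec n) k)ᵀ = 0 := by
  refine ⟨h3, by simpa using posSemidef_vecMulVec_self_star w, ?_⟩
  have hZt : Zᵀ = Z := hZ.isHermitian
  have hv : Z *ᵥ h + (w ⬝ᵥ (k - h)) • w = -((Smat n * Z) *ᵥ gvec n) := by
    rw [add_assoc, add_comm] at h2
    exact eq_neg_of_add_eq_zero_left h2
  have hproj : Smat n * Z * Pimat n + Pimat n * (Smat n * Z)ᵀ = 0 := by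
    rw [Pimat_mul_Smat, Matrix.mul_assoc (Pimat n * Z), Smat_transpose_mul_Pimat] at h1
    rwa [transpose_mul, hZt, ← Matrix.mul_assoc]
  calc _ = Smat n * Z + (Smat n * Z)ᵀ - vecMulVec (gvec n) ((Smat n * Z) *ᵥ gvec n) -
          vecMulVec ((Smat n * Z) *ᵥ gvec n) (gvec n) := by
        rw [lyapunov_sum_add_vecMulVec _ _ hZt, hv, transpose_mul, hZt, vecMulVec_neg,
          neg_vecMulVec]
        abel
    _ = 0 := by rw [← mul_one_sub_vecMulVec_add, ← Pimat, hproj]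

/-- If `Z ≥ 0` and `w` satisfy `Π·S·Z·Π + Π·Z·Sᵀ·Π = 0`, `S·Z·g + Z·h + ⟨w, k−h⟩·w = 0`,
and `Z − w·wᵀ ≥ 0`, then `X' = Z − w·wᵀ` and `Y' = w·wᵀ` are positive semidefinite and
solve `A·X' + X'·Aᵀ + B·Y' + Y'·Bᵀ = 0` where `A = S + g·hᵀ` and `B = S + g·kᵀ`. -/
theorem Z_w_solution_gives_XY {n : ℕ} (hn : 0 < n) (h k : Fin n → ℝ)
    (Z : Matrix (Fin n) (Fin n) ℝ) (w : Fin n → ℝ)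
    (hZ : Z.PosSemidef)
    (h1 : Pimat n * Smat n * Z * Pimat n + Pimat n * Z * (Smat n)ᵀ * Pimat n = 0)
    (h2 : (Smat n * Z).mulVec (gvec n) + Z.mulVec h + (w ⬝ᵥ (k - h)) • w = 0)
    (h3 : (Z - vecMulVec w w).PosSemidef) :
    (Z - vecMulVec w w).PosSemidef ∧ (vecMulVec w w).PosSemidef ∧
      (Smat n + vecMulVec (gvec n) h) * (Z - vecMulVec w w) +
        (Z - vecMulVec w w) * (Smat n + vecMulVec (gvec n) h)ᵀ +
        (Smat n + vecMulVec (gvec n) k) * vecMulVec w w +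
        vecMulVec w w * (Smat n + vecMulVec (gvec n) k)ᵀ = 0 :=
  Z_w_solution_gives_XY_general h k Z w hZ h1 h2 h3
end

section
/- Let A = S + g·hᵀ and B = S + g·kᵀ be stable real n×n matrices in companion form, and suppose X and Y are nonzero real symmetric positive semidefinite matrices with A·X + X·Aᵀ + B·Y + Y·Bᵀ = 0. Set Z = X + Y and ξ = S·Z·g + Z·h. Then Z satisfies Π·S·Z·Π + Π·Z·Sᵀ·Π = 0, the vector ξ lies in the range of Z, ⟨h−k, ξ⟩ > 0, and ⟨ξ, Z⁺·ξ⟩ ≤ ⟨h−k, ξ⟩, where Z⁺ is the Moore–Penrose pseudoinverse of Z. -/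
/-!
With `w = X h + Y k`, the equation reads `S Z + Z Sᵀ + g wᵀ + w gᵀ = 0`. Applying it to the unit
vector `g`, which `Sᵀ` kills, gives `S Z g = -w`; hence `ξ = Y (h - k)`, and `Π` annihilates the
rank-two term. The same identity turns into `A Z + Z Aᵀ = g ξᵀ + ξ gᵀ`, so `ξ = 0` would make `Z`
a solution of a homogeneous Lyapunov equation for the stable `A`; since `σ(A)` and `σ(-Aᵀ)` are
disjoint, `Z = 0` and then `Y = 0`. Finally `ker Z ⊆ ker Y` puts `ξ` in the range of `Z`, and for
`ξ = Z b` the Penrose identity `Z Z⁺ Z = Z` gives `ξᵀ Z⁺ ξ = bᵀ Z b ≤ (h - k)ᵀ Y (h - k)`.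
-/

open Matrix

/-- `P` is the Moore–Penrose pseudoinverse of `M` (the four Penrose conditions). -/
def IsMoorePenroseInv {n : ℕ} (M P : Matrix (Fin n) (Fin n) ℝ) : Prop :=
  M * P * M = M ∧ P * M * P = P ∧ (M * P)ᵀ = M * P ∧ (P * M)ᵀ = P * M

section Sylvester

open Polynomial

variable {m p : Type*} [Fintype m] [DecidableEq m] [Fintype p] [DecidableEq p]

theorem Matrix.pow_mul_eq_mul_pow {R : Type*} [Semiring R] {A : Matrix m m R}
    {N : Matrix p p R} {Z : Matrix m p R} (h : A * Z = Z * N) (k : ℕ) :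
    A ^ k * Z = Z * N ^ k := by
  induction k with
  | zero => simp
  | succ k ih => rw [pow_succ', Matrix.mul_assoc, ih, ← Matrix.mul_assoc, h, Matrix.mul_assoc,
      ← pow_succ']

theorem Matrix.aeval_mul_eq_mul_aeval {R : Type*} [CommSemiring R] {A : Matrix m m R}
    {N : Matrix p p R} {Z : Matrix m p R} (h : A * Z = Z * N) (q : R[X]) :
    aeval A q * Z = Z * aeval N q := by
  induction q using Polynomial.induction_on' with
  | add q r hq hr => rw [map_add, map_add, Matrix.add_mul, Matrix.mul_add, hq, hr]
  | monomial k a =>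
    rw [aeval_monomial, aeval_monomial, ← Algebra.smul_def, ← Algebra.smul_def, Matrix.smul_mul,
      Matrix.mul_smul, pow_mul_eq_mul_pow h]

theorem Matrix.spectrum_transpose {K : Type*} [Field K] (A : Matrix m m K) :
    spectrum K Aᵀ = spectrum K A := by
  ext μ
  simp only [mem_spectrum_iff_isRoot_charpoly, charpoly_transpose]

theorem Matrix.eq_zero_of_mul_eq_mul_of_disjoint_spectrum {K : Type*} [Field K] [IsAlgClosed K]
    {A : Matrix m m K} {N : Matrix p p K} {Z : Matrix m p K} (h : A * Z = Z * N)
    (hAN : Disjoint (spectrum K A) (spectrum K N)) : Z = 0 := by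
  rcases isEmpty_or_nonempty m with hm | hm
  · exact Subsingleton.elim _ _
  have hdeg : 0 < A.charpoly.degree := by
    rw [charpoly_degree_eq_dim]; exact_mod_cast Fintype.card_pos
  have hunit : IsUnit (aeval N A.charpoly) := by
    rw [← spectrum.zero_notMem_iff K, spectrum.map_polynomial_aeval_of_degree_pos N _ hdeg]
    rintro ⟨μ, hμN, hμA⟩
    exact hAN.notMem_of_mem_right hμN (mem_spectrum_iff_isRoot_charpoly.mpr hμA)
  obtain ⟨u, hu⟩ := hunit
  calc Z = Z * aeval N A.charpoly * (↑u⁻¹ : Matrix p p K) := by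
        rw [← hu, Matrix.mul_assoc, Units.mul_inv, Matrix.mul_one]
    _ = 0 := by
        rw [← aeval_mul_eq_mul_aeval h, aeval_self_charpoly, Matrix.zero_mul, Matrix.zero_mul]

end Sylvester

section Lyapunov

variable {m R : Type*} [Fintype m] [CommSemiring R]

def lyapunov (A X : Matrix m m R) : Matrix m m R := A * X + X * Aᵀ

lemma lyapunov_add_left (A B X : Matrix m m R) :
    lyapunov (A + B) X = lyapunov A X + lyapunov B X := by
  simp only [lyapunov, transpose_add, Matrix.add_mul, Matrix.mul_add]; abel

lemma lyapunov_add_right (A X Y : Matrix m m R) :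
    lyapunov A (X + Y) = lyapunov A X + lyapunov A Y := by
  simp only [lyapunov, Matrix.add_mul, Matrix.mul_add]; abel

lemma lyapunov_vecMulVec (g h : m → R) {X : Matrix m m R} (hX : Xᵀ = X) :
    lyapunov (vecMulVec g h) X = vecMulVec g (X *ᵥ h) + vecMulVec (X *ᵥ h) g := by
  rw [lyapunov, vecMulVec_mul, transpose_vecMulVec, mul_vecMulVec, ← mulVec_transpose, hX]

end Lyapunov

theorem IsStable.eq_zero_of_lyapunov_eq_zero {n : ℕ} {A Z : Matrix (Fin n) (Fin n) ℝ}
    (hA : IsStable A) (hAZ : lyapunov A Z = 0) : Z = 0 := by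
  set Ac := A.map (algebraMap ℝ ℂ)
  have hc : Ac * Z.map (algebraMap ℝ ℂ) = Z.map (algebraMap ℝ ℂ) * -Acᵀ := by
    have := congrArg (algebraMap ℝ ℂ).mapMatrix hAZ
    rw [lyapunov, map_add, map_mul, map_mul, map_zero, RingHom.mapMatrix_apply,
      RingHom.mapMatrix_apply, RingHom.mapMatrix_apply, transpose_map] at this
    rwa [Matrix.mul_neg, eq_neg_iff_add_eq_zero]
  have hdisj : Disjoint (spectrum ℂ Ac) (spectrum ℂ (-Acᵀ)) := by
    rw [← spectrum.neg_eq, spectrum_transpose]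
    refine Set.disjoint_left.mpr fun μ hμ hμ' => ?_
    have h1 := hA _ hμ
    have h2 := hA _ (Set.mem_neg.mp hμ')
    rw [Complex.neg_re] at h2
    linarith
  refine map_injective (algebraMap ℝ ℂ).injective ?_
  simpa using eq_zero_of_mul_eq_mul_of_disjoint_spectrum hc hdisj

section PosSemidef

variable {m : Type*} {X Y : Matrix m m ℝ}

lemma Matrix.PosSemidef.transpose_eq (hX : X.PosSemidef) : Xᵀ = X := by
  rw [← conjTranspose_eq_transpose_of_trivial]; exact hX.isHermitian

variable [Fintype m]

lemma Matrix.PosSemidef.dotProduct_mulVec_self_nonneg (hX : X.PosSemidef) (v : m → ℝ) :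
    0 ≤ v ⬝ᵥ X *ᵥ v := by
  simpa only [star_trivial] using hX.dotProduct_mulVec_nonneg v

lemma Matrix.PosSemidef.dotProduct_mulVec_pos (hY : Y.PosSemidef) {v : m → ℝ}
    (hv : Y *ᵥ v ≠ 0) : 0 < v ⬝ᵥ Y *ᵥ v := by
  refine (hY.dotProduct_mulVec_self_nonneg v).lt_of_ne' fun h0 => hv ?_
  rw [← hY.dotProduct_mulVec_zero_iff, star_trivial, h0]

lemma Matrix.PosSemidef.mulVec_eq_zero_of_add_mulVec_eq_zero (hX : X.PosSemidef)
    (hY : Y.PosSemidef) {v : m → ℝ} (hv : (X + Y) *ᵥ v = 0) : Y *ᵥ v = 0 := by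
  have hsum : v ⬝ᵥ X *ᵥ v + v ⬝ᵥ Y *ᵥ v = 0 := by
    rw [← dotProduct_add, ← add_mulVec, hv, dotProduct_zero]
  rw [← hY.dotProduct_mulVec_zero_iff, star_trivial]
  linarith [hX.dotProduct_mulVec_self_nonneg v, hY.dotProduct_mulVec_self_nonneg v]

/-- Expand `0 ≤ (b - d)ᵀ Y (b - d)` and use `bᵀ Y d = bᵀ (X + Y) b ≥ bᵀ Y b`. -/
lemma Matrix.PosSemidef.dotProduct_add_mulVec_le (hX : X.PosSemidef) (hY : Y.PosSemidef)
    {b d : m → ℝ} (h : (X + Y) *ᵥ b = Y *ᵥ d) : b ⬝ᵥ (X + Y) *ᵥ b ≤ d ⬝ᵥ Y *ᵥ d := by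
  have hsymm : d ⬝ᵥ Y *ᵥ b = b ⬝ᵥ Y *ᵥ d := by
    rw [dotProduct_mulVec, ← mulVec_transpose, hY.transpose_eq, dotProduct_comm]
  have hsq := hY.dotProduct_mulVec_self_nonneg (b - d)
  simp only [mulVec_sub, sub_dotProduct, dotProduct_sub, hsymm] at hsq
  have hbZb : b ⬝ᵥ X *ᵥ b + b ⬝ᵥ Y *ᵥ b = b ⬝ᵥ Y *ᵥ d := by
    rw [← dotProduct_add, ← add_mulVec, h]
  rw [h]
  linarith [hX.dotProduct_mulVec_self_nonneg b]

end PosSemidef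

section GeneralizedInverse

variable {m : Type*} [Fintype m] {R : Type*} [CommRing R] {Z P Y : Matrix m m R}

lemma Matrix.mul_mul_eq_of_ker_le (hZP : Z * P * Z = Z)
    (hker : ∀ v, Z *ᵥ v = 0 → Y *ᵥ v = 0) : Y * P * Z = Y := by
  refine (ext_iff_mulVec.mpr fun v => ?_).symm
  have hproj : Z *ᵥ (v - (P * Z) *ᵥ v) = 0 := by
    rw [mulVec_sub, mulVec_mulVec, ← Matrix.mul_assoc, hZP, sub_self]
  rw [Matrix.mul_assoc, ← mulVec_mulVec, ← sub_eq_zero, ← mulVec_sub]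
  exact hker _ hproj

lemma Matrix.exists_mulVec_eq_of_ker_le (hZP : Z * P * Z = Z) (hZ : Zᵀ = Z) (hY : Yᵀ = Y)
    (hker : ∀ v, Z *ᵥ v = 0 → Y *ᵥ v = 0) (d : m → R) : ∃ b, Z *ᵥ b = Y *ᵥ d :=
  ⟨d ᵥ* (Y * P), by
    rw [← vecMul_transpose, hZ, vecMul_vecMul, mul_mul_eq_of_ker_le hZP hker, ← mulVec_transpose,
      hY]⟩

lemma Matrix.dotProduct_mulVec_mulVec_eq_of_mul_mul_eq (hZ : Zᵀ = Z) (hZP : Z * P * Z = Z)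
    (b : m → R) : (Z *ᵥ b) ⬝ᵥ P *ᵥ (Z *ᵥ b) = b ⬝ᵥ Z *ᵥ b := by
  have hbZ : b ᵥ* Z = Z *ᵥ b := by rw [← mulVec_transpose, hZ]
  nth_rw 1 [← hbZ]
  rw [← dotProduct_mulVec, mulVec_mulVec, mulVec_mulVec, hZP]

end GeneralizedInverse

section RankTwoPerturbation

variable {m : Type*} [Fintype m] {S Z : Matrix m m ℝ} {g w : m → ℝ}

lemma mulVec_eq_neg_of_lyapunov_add_eq_zero (hSg : Sᵀ *ᵥ g = 0) (hg : g ⬝ᵥ g = 1)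
    (h : lyapunov S Z + (vecMulVec g w + vecMulVec w g) = 0) : (S * Z) *ᵥ g = -w := by
  have hg' : (S * Z) *ᵥ g + (w ⬝ᵥ g) • g + w = 0 := by
    have := congrArg (· *ᵥ g) h
    simp only [lyapunov, add_mulVec, zero_mulVec, vecMulVec_mulVec, ← mulVec_mulVec, hSg,
      mulVec_zero, hg] at this
    simpa [add_assoc] using this
  have hwg : w ⬝ᵥ g = 0 := by
    have := congrArg (g ⬝ᵥ ·) hg'
    simp only [dotProduct_add, dotProduct_smul, hg, dotProduct_zero, smul_eq_mul, mul_one,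
      ← mulVec_mulVec, dotProduct_mulVec, ← mulVec_transpose, hSg, mulVec_zero, zero_dotProduct,
      dotProduct_comm g w] at this
    linarith
  rw [hwg, zero_smul, add_zero] at hg'
  exact eq_neg_of_add_eq_zero_left hg'

lemma lyapunov_add_vecMulVec (hZ : Zᵀ = Z) (hSZg : (S * Z) *ᵥ g = -w)
    (h : lyapunov S Z + (vecMulVec g w + vecMulVec w g) = 0) (k : m → ℝ) :
    lyapunov (S + vecMulVec g k) Z =
      vecMulVec g ((S * Z) *ᵥ g + Z *ᵥ k) + vecMulVec ((S * Z) *ᵥ g + Z *ᵥ k) g := by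
  rw [lyapunov_add_left, lyapunov_vecMulVec _ _ hZ, eq_neg_of_add_eq_zero_left h, hSZg,
    vecMulVec_add, add_vecMulVec, vecMulVec_neg, neg_vecMulVec]
  abel

end RankTwoPerturbation

section Companion

variable {n : ℕ}

lemma Smat_transpose_mulVec_gvec : (Smat n)ᵀ *ᵥ gvec n = 0 := by
  funext i
  simp only [mulVec, dotProduct, transpose_apply, Smat, gvec, of_apply, Pi.zero_apply, mul_ite,
    mul_one, mul_zero]
  refine Finset.sum_eq_zero fun j _ => ?_
  have := i.isLt
  split_ifs <;> first | rfl | omega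

lemma gvec_dotProduct_self (hn : 0 < n) : gvec n ⬝ᵥ gvec n = 1 := by
  have : gvec n = Pi.single (⟨n - 1, by omega⟩ : Fin n) 1 := by
    funext i; simp [gvec, Pi.single_apply, Fin.ext_iff]
  simp [this]

lemma Pimat_mul_vecMulVec_add_mul_Pimat (hn : 0 < n) (w : Fin n → ℝ) :
    Pimat n * (vecMulVec (gvec n) w + vecMulVec w (gvec n)) * Pimat n = 0 := by
  have hl : Pimat n * vecMulVec (gvec n) w = 0 := by
    rw [Pimat, Matrix.sub_mul, Matrix.one_mul, vecMulVec_mul_vecMulVec, gvec_dotProduct_self hn,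
      one_smul, sub_self]
  have hr : vecMulVec w (gvec n) * Pimat n = 0 := by
    rw [Pimat, Matrix.mul_sub, Matrix.mul_one, vecMulVec_mul_vecMulVec, gvec_dotProduct_self hn,
      one_smul, sub_self]
  rw [Matrix.mul_add, hl, zero_add, Matrix.mul_assoc, hr, Matrix.mul_zero]

end Companion

theorem XY_solution_gives_Z_with_F_le_one_general {n : ℕ} (hn : 0 < n) (h k : Fin n → ℝ)
    (hA : IsStable (Smat n + vecMulVec (gvec n) h))
    (X Y : Matrix (Fin n) (Fin n) ℝ) (hY0 : Y ≠ 0)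
    (hX : X.PosSemidef) (hY : Y.PosSemidef)
    (heq : (Smat n + vecMulVec (gvec n) h) * X + X * (Smat n + vecMulVec (gvec n) h)ᵀ +
      (Smat n + vecMulVec (gvec n) k) * Y + Y * (Smat n + vecMulVec (gvec n) k)ᵀ = 0)
    (Z : Matrix (Fin n) (Fin n) ℝ) (hZdef : Z = X + Y)
    (ξ : Fin n → ℝ) (hξ : ξ = (Smat n * Z).mulVec (gvec n) + Z.mulVec h)
    (Zp : Matrix (Fin n) (Fin n) ℝ) (hZp : IsMoorePenroseInv Z Zp) :
    (Pimat n * Smat n * Z * Pimat n + Pimat n * Z * (Smat n)ᵀ * Pimat n = 0) ∧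
    (∃ y : Fin n → ℝ, Z.mulVec y = ξ) ∧
    0 < (h - k) ⬝ᵥ ξ ∧
    ξ ⬝ᵥ Zp.mulVec ξ ≤ (h - k) ⬝ᵥ ξ := by
  have hZt : Zᵀ = Z := hZdef ▸ (hX.add hY).transpose_eq
  set w := X *ᵥ h + Y *ᵥ k
  have hw : lyapunov (Smat n) Z + (vecMulVec (gvec n) w + vecMulVec w (gvec n)) = 0 := by
    have hXY : lyapunov (Smat n + vecMulVec (gvec n) h) X +
        lyapunov (Smat n + vecMulVec (gvec n) k) Y = 0 := by
      rw [← heq, lyapunov, lyapunov, ← add_assoc]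
    rw [lyapunov_add_left, lyapunov_add_left, lyapunov_vecMulVec _ _ hX.transpose_eq,
      lyapunov_vecMulVec _ _ hY.transpose_eq] at hXY
    rw [← hXY, hZdef, lyapunov_add_right, vecMulVec_add, add_vecMulVec]
    abel
  have hSZg := mulVec_eq_neg_of_lyapunov_add_eq_zero Smat_transpose_mulVec_gvec
    (gvec_dotProduct_self hn) hw
  have hξY : ξ = Y *ᵥ (h - k) := by
    rw [hξ, hSZg, hZdef, add_mulVec, mulVec_sub, neg_add]; abel
  have hker : ∀ v, Z *ᵥ v = 0 → Y *ᵥ v = 0 := fun v hv =>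
    hX.mulVec_eq_zero_of_add_mulVec_eq_zero hY (hZdef ▸ hv)
  have hξ0 : ξ ≠ 0 := by
    intro hξ0
    have hZ0 : Z = 0 := hA.eq_zero_of_lyapunov_eq_zero <| by
      rw [lyapunov_add_vecMulVec hZt hSZg hw, ← hξ, hξ0, vecMulVec_zero, zero_vecMulVec,
        add_zero]
    exact hY0 (ext_iff_mulVec.mpr fun v => by simpa [hZ0] using hker v)
  obtain ⟨b, hb⟩ := exists_mulVec_eq_of_ker_le hZp.1 hZt hY.transpose_eq hker (h - k)
  refine ⟨?_, ⟨b, hb.trans hξY.symm⟩, hξY ▸ hY.dotProduct_mulVec_pos (hξY ▸ hξ0), ?_⟩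
  · calc _ = Pimat n * lyapunov (Smat n) Z * Pimat n := by rw [lyapunov]; noncomm_ring
      _ = 0 := by
        rw [eq_neg_of_add_eq_zero_left hw, Matrix.mul_neg, Matrix.neg_mul,
          Pimat_mul_vecMulVec_add_mul_Pimat hn, neg_zero]
  · calc ξ ⬝ᵥ Zp *ᵥ ξ = b ⬝ᵥ Z *ᵥ b := by
          rw [hξY, ← hb, dotProduct_mulVec_mulVec_eq_of_mul_mul_eq hZt hZp.1]
      _ ≤ (h - k) ⬝ᵥ Y *ᵥ (h - k) := hZdef ▸ hX.dotProduct_add_mulVec_le hY (hZdef ▸ hb)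
      _ = (h - k) ⬝ᵥ ξ := by rw [hξY]

/-- From a nonzero positive semidefinite solution `(X, Y)` of the Lyapunov intersection
equation for stable companion-form `A = S + g·hᵀ`, `B = S + g·kᵀ`, the matrix `Z = X + Y`
satisfies the Hankel equation, `ξ = S·Z·g + Z·h` lies in the range of `Z`, `⟨h−k, ξ⟩ > 0`,
and `⟨ξ, Z⁺ξ⟩ ≤ ⟨h−k, ξ⟩` (i.e. `0 < F(Z) ≤ 1`). -/
theorem XY_solution_gives_Z_with_F_le_one {n : ℕ} (hn : 0 < n) (h k : Fin n → ℝ)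
    (hA : IsStable (Smat n + vecMulVec (gvec n) h))
    (hB : IsStable (Smat n + vecMulVec (gvec n) k))
    (X Y : Matrix (Fin n) (Fin n) ℝ) (hX0 : X ≠ 0) (hY0 : Y ≠ 0)
    (hX : X.PosSemidef) (hY : Y.PosSemidef)
    (heq : (Smat n + vecMulVec (gvec n) h) * X + X * (Smat n + vecMulVec (gvec n) h)ᵀ +
      (Smat n + vecMulVec (gvec n) k) * Y + Y * (Smat n + vecMulVec (gvec n) k)ᵀ = 0)
    (Z : Matrix (Fin n) (Fin n) ℝ) (hZdef : Z = X + Y)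
    (ξ : Fin n → ℝ) (hξ : ξ = (Smat n * Z).mulVec (gvec n) + Z.mulVec h)
    (Zp : Matrix (Fin n) (Fin n) ℝ) (hZp : IsMoorePenroseInv Z Zp) :
    (Pimat n * Smat n * Z * Pimat n + Pimat n * Z * (Smat n)ᵀ * Pimat n = 0) ∧
    (∃ y : Fin n → ℝ, Z.mulVec y = ξ) ∧
    0 < (h - k) ⬝ᵥ ξ ∧
    ξ ⬝ᵥ Zp.mulVec ξ ≤ (h - k) ⬝ᵥ ξ :=
  XY_solution_gives_Z_with_F_le_one_general hn h k hA X Y hY0 hX hY heq Z hZdef ξ hξ Zp hZp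
end

section
/- Let m ≥ 1 and let s₀, s₁, …, s_{2m−2} be real numbers such that the m×m Hankel matrix K with entries K_{ij} = s_{i+j−2} (1 ≤ i,j ≤ m) is positive semidefinite. Then there exist an integer p with 0 ≤ p ≤ m−1, distinct real numbers x₁, …, x_p, positive real numbers μ₁, …, μ_p, and a real number M ≥ 0 such that s_k = Σ_{i=1}^{p} μᵢ·xᵢ^k for k = 0, …, 2m−3, and s_{2m−2} = Σ_{i=1}^{p} μᵢ·xᵢ^{2m−2} + M. -/
/-!
Let `L` be the Riesz functional `X ^ k ↦ s k` and `n = m - 1`. The Hankel matrix is the Gram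
matrix of `(p, q) ↦ L (p q)` on polynomials of degree `≤ n`, so `L (q ^ 2) ≥ 0` for `deg q ≤ n`.
Take `d ≤ n` maximal such that `L (q ^ 2) > 0` for all nonzero `q` of degree `< d`. Some monic `g`
of degree `d` makes `L` vanish on all multiples of `g` of degree `< 2n`: for `d = n` the
orthogonal polynomial of degree `n`; for `d < n` a normalised null vector of degree `d`, whose
orthogonality propagates to higher shifts because the null space of a positive semidefinite
Hankel form is shift invariant.

On `ℝ[X] ⧸ (g)` the form `(p, q) ↦ L (p q mod g)` is positive definite and multiplication by `X`
is self-adjoint for it; diagonalising it gives nodes `xᵢ` and weights `μᵢ ≥ 0` with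
`L (p mod g) = ∑ μᵢ p(xᵢ)` (Gaussian quadrature). This is `L p` when `deg p < 2n`, and at
`X ^ (2n)` the defect is `L (h ^ 2) ≥ 0` with `h = X ^ (n - d) g`.
-/

open Matrix Polynomial Finset

namespace Matrix

variable {ι : Type*} [Fintype ι] [DecidableEq ι]

lemma IsHermitian.exists_dotProduct_pow_mulVec_eq_sum {A : Matrix ι ι ℝ} (hA : A.IsHermitian)
    (z : ι → ℝ) : ∃ μ : ι → ℝ, (∀ i, 0 ≤ μ i) ∧
      ∀ k : ℕ, z ⬝ᵥ (A ^ k *ᵥ z) = ∑ i, μ i * hA.eigenvalues i ^ k := by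
  set U : Matrix ι ι ℝ := (hA.eigenvectorUnitary : Matrix ι ι ℝ)
  refine ⟨fun i => (star U *ᵥ z) i ^ 2, fun i => sq_nonneg _, fun k => ?_⟩
  have hpow : A ^ k = U * diagonal (fun i => hA.eigenvalues i ^ k) * star U := by
    conv_lhs => rw [hA.spectral_theorem, ← map_pow, diagonal_pow]
    simp only [RCLike.ofReal_real_eq_id, CompTriple.comp_eq, Unitary.conjStarAlgAut_apply]
    rfl
  rw [hpow, ← mulVec_mulVec, ← mulVec_mulVec, dotProduct_mulVec, ← mulVec_transpose,
    ← conjTranspose_eq_transpose_of_trivial, ← star_eq_conjTranspose]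
  simp only [dotProduct, mulVec_diagonal]
  exact Finset.sum_congr rfl fun i _ => by ring

open scoped MatrixOrder in
lemma PosDef.exists_dotProduct_mul_pow_mulVec_eq_sum {G T : Matrix ι ι ℝ} (hG : G.PosDef)
    (hGT : (G * T).IsHermitian) (v : ι → ℝ) : ∃ x μ : ι → ℝ, (∀ i, 0 ≤ μ i) ∧
      ∀ k : ℕ, v ⬝ᵥ (G * T ^ k) *ᵥ v = ∑ i, μ i * x i ^ k := by
  obtain ⟨B, rfl⟩ := CStarAlgebra.nonneg_iff_eq_star_mul_self.mp hG.posSemidef.nonneg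
  have hB : IsUnit B := by
    have := hG.isUnit
    rw [isUnit_iff_isUnit_det, det_mul] at this
    exact (isUnit_iff_isUnit_det B).2 (isUnit_of_mul_isUnit_right this)
  -- `T` is self-adjoint for the form `G = Bᴴ B`, so `B T B⁻¹` is symmetric
  set A := B * T * B⁻¹
  have hBT : ∀ k : ℕ, B * T ^ k = A ^ k * B := fun k =>
    (SemiconjBy.pow_right (show B * T = A * B by
      rw [mul_assoc, nonsing_inv_mul _ ((isUnit_iff_isUnit_det B).1 hB), mul_one]) k)
  have hA : A.IsHermitian := by
    have hB' : IsUnit (star B).det := by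
      rw [star_eq_conjTranspose, det_conjTranspose]; exact ((isUnit_iff_isUnit_det B).1 hB).star
    have hA' : A = (star B)⁻¹ * (star B * B * T) * B⁻¹ := by
      rw [mul_assoc (star B), ← mul_assoc (star B)⁻¹, nonsing_inv_mul _ hB', one_mul]
    rw [IsHermitian, hA', conjTranspose_mul, conjTranspose_mul, hGT.eq, conjTranspose_nonsing_inv,
      conjTranspose_nonsing_inv, star_eq_conjTranspose, conjTranspose_conjTranspose]
    simp only [Matrix.mul_assoc]
  obtain ⟨μ, hμ, hsum⟩ := hA.exists_dotProduct_pow_mulVec_eq_sum (B *ᵥ v)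
  refine ⟨hA.eigenvalues, μ, hμ, fun k => ?_⟩
  rw [← hsum k, mul_assoc, hBT k, ← mulVec_mulVec, ← mulVec_mulVec, dotProduct_mulVec,
    star_eq_conjTranspose, ← mulVec_transpose, ← conjTranspose_eq_transpose_of_trivial,
    conjTranspose_conjTranspose]

end Matrix

lemma exists_finset_sum_mul_eq_of_nonneg {ι α : Type*} [Fintype ι] [DecidableEq α] (x : ι → α)
    (μ : ι → ℝ) (hμ : ∀ i, 0 ≤ μ i) :
    ∃ (F : Finset α) (w : α → ℝ), F.card ≤ Fintype.card ι ∧ (∀ t ∈ F, 0 < w t) ∧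
      ∀ f : α → ℝ, ∑ i, μ i * f (x i) = ∑ t ∈ F, w t * f t := by
  classical
  set S := univ.filter fun i => 0 < μ i
  refine ⟨S.image x, fun t => ∑ i ∈ S with x i = t, μ i,
    card_image_le.trans (card_filter_le _ _), fun t ht => ?_, fun f => ?_⟩
  · obtain ⟨i, hi, rfl⟩ := mem_image.1 ht
    exact sum_pos' (fun j _ => hμ j) ⟨i, mem_filter.2 ⟨hi, rfl⟩, (mem_filter.1 hi).2⟩
  · rw [← sum_filter_of_ne fun i _ hi => (hμ i).lt_of_ne' (left_ne_zero_of_mul hi),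
      ← sum_fiberwise_of_maps_to fun i hi => mem_image_of_mem x hi]
    refine sum_congr rfl fun t _ => ?_
    rw [sum_mul]
    exact sum_congr rfl fun i hi => by rw [(mem_filter.1 hi).2]

namespace Finset

lemma exists_enumeration {α : Type*} [Inhabited α] (F : Finset α) :
    ∃ x : ℕ → α, (∀ i < F.card, ∀ j < F.card, i ≠ j → x i ≠ x j) ∧ (∀ i < F.card, x i ∈ F) ∧
      ∀ f : α → ℝ, ∑ i ∈ range F.card, f (x i) = ∑ t ∈ F, f t := by
  set e := F.equivFin
  refine ⟨fun i => if h : i < F.card then e.symm ⟨i, h⟩ else default, ?_, ?_, fun f => ?_⟩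
  · intro i hi j hj hij
    simpa [hi, hj, Subtype.ext_iff] using hij
  · intro i hi
    simp [hi]
  · rw [sum_range, ← sum_coe_sort F, ← e.symm.sum_comp]
    exact sum_congr rfl fun i _ => by simp

end Finset

namespace MomentProblem

noncomputable def rieszFunctional (s : ℕ → ℝ) : ℝ[X] →ₗ[ℝ] ℝ :=
  Polynomial.lsum fun k => s k • LinearMap.id

@[simp]
lemma rieszFunctional_X_pow (s : ℕ → ℝ) (k : ℕ) : rieszFunctional s (X ^ k) = s k := by
  simp [rieszFunctional, X_pow_eq_monomial]

noncomputable def hankel (L : ℝ[X] →ₗ[ℝ] ℝ) (d : ℕ) : Matrix (Fin d) (Fin d) ℝ :=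
  Matrix.of fun i j => L (X ^ (i + j : ℕ))

def PosDefBelow (L : ℝ[X] →ₗ[ℝ] ℝ) (d : ℕ) : Prop :=
  ∀ q : ℝ[X], q ≠ 0 → q.natDegree < d → 0 < L (q * q)

def VanishesOnMultiples (L : ℝ[X] →ₗ[ℝ] ℝ) (g : ℝ[X]) (N : ℕ) : Prop :=
  ∀ p : ℝ[X], g ∣ p → p.degree < N → L p = 0

variable {L : ℝ[X] →ₗ[ℝ] ℝ}

lemma map_mul_eq_zero_of_forall_X_pow {q r : ℝ[X]} {K : ℕ}
    (h : ∀ j < K, L (q * X ^ j) = 0) (hr : r.degree < K) : L (q * r) = 0 := by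
  classical
  have : degreeLT ℝ K ≤ LinearMap.ker (L ∘ₗ LinearMap.mulLeft ℝ q) := by
    rw [degreeLT_eq_span_X_pow, Submodule.span_le]
    intro p hp
    obtain ⟨j, hj, rfl⟩ := by simpa using hp
    simpa using h j hj
  exact this (mem_degreeLT.2 hr)

lemma vanishesOnMultiples_of_forall_X_pow {g : ℝ[X]} {N : ℕ} (hg : g.Monic)
    (h : ∀ j, j + g.natDegree < N → L (g * X ^ j) = 0) : VanishesOnMultiples L g N := by
  rintro _ ⟨r, rfl⟩ hdeg
  rcases eq_or_ne r 0 with rfl | hr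
  · simp
  rw [degree_mul, degree_eq_natDegree hg.ne_zero, degree_eq_natDegree hr] at hdeg
  norm_cast at hdeg
  refine map_mul_eq_zero_of_forall_X_pow (K := N - g.natDegree) (fun j hj => h j (by omega)) ?_
  rw [degree_eq_natDegree hr]
  exact_mod_cast (by omega : r.natDegree < N - g.natDegree)

lemma VanishesOnMultiples.mono {g : ℝ[X]} {N N' : ℕ} (h : VanishesOnMultiples L g N)
    (hN : N' ≤ N) : VanishesOnMultiples L g N' :=
  fun p hgp hp => h p hgp (hp.trans_le (by exact_mod_cast hN))

lemma sum_fin_monomial_coeff {p : ℝ[X]} {d : ℕ} (hp : p.degree < d) :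
    ∑ i : Fin d, monomial i (p.coeff i) = p :=
  (p.sum_fin (monomial ·) (by simp) hp).trans p.sum_monomial_eq

lemma map_monomial_eq_mul (n : ℕ) (c : ℝ) : L (monomial n c) = c * L (X ^ n) := by
  rw [← C_mul_X_pow_eq_monomial, ← smul_eq_C_mul, map_smul, smul_eq_mul]

lemma hankel_mulVec_apply {b : ℝ[X]} {d : ℕ} (hb : b.degree < d) (j : Fin d) :
    (hankel L d *ᵥ fun i => b.coeff i) j = L (X ^ (j : ℕ) * b) := by
  conv_rhs => rw [← sum_fin_monomial_coeff hb]
  simp only [mulVec, dotProduct, hankel, of_apply, Finset.mul_sum, map_sum, X_pow_mul_monomial,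
    map_monomial_eq_mul]
  exact Finset.sum_congr rfl fun i _ => by rw [mul_comm, add_comm]

lemma dotProduct_hankel_mulVec {a b : ℝ[X]} {d : ℕ} (ha : a.degree < d) (hb : b.degree < d) :
    (fun i : Fin d => a.coeff i) ⬝ᵥ hankel L d *ᵥ (fun i => b.coeff i) = L (a * b) := by
  conv_rhs => rw [← sum_fin_monomial_coeff ha]
  simp only [dotProduct, hankel_mulVec_apply hb, Finset.sum_mul, map_sum, ← smul_X_eq_monomial,
    smul_mul_assoc, map_smul, smul_eq_mul]

lemma isHermitian_hankel (d : ℕ) : (hankel L d).IsHermitian := by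
  ext i j
  simp [hankel, add_comm]

lemma PosDefBelow.posDef_hankel {d : ℕ} (h : PosDefBelow L d) : (hankel L d).PosDef := by
  refine .of_dotProduct_mulVec_pos (isHermitian_hankel d) fun v hv => ?_
  set q := (degreeLTEquiv ℝ d).symm v
  have hqv : (fun i : Fin d => (q : ℝ[X]).coeff i) = v := (degreeLTEquiv ℝ d).apply_symm_apply v
  have hq : (q : ℝ[X]).degree < d := mem_degreeLT.1 q.2
  have hq0 : (q : ℝ[X]) ≠ 0 := by
    rintro h0
    exact hv (by rw [← hqv, h0]; rfl)
  rw [star_trivial, ← hqv, dotProduct_hankel_mulVec hq hq]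
  exact h _ hq0 ((natDegree_lt_iff_degree_lt hq0).2 hq)

lemma map_mul_self_nonneg_of_posSemidef {d : ℕ} (hK : (hankel L d).PosSemidef) {q : ℝ[X]}
    (hq : q.degree < d) : 0 ≤ L (q * q) := by
  simpa [dotProduct_hankel_mulVec hq hq] using hK.dotProduct_mulVec_nonneg fun i => q.coeff i

lemma PosDefBelow.exists_monic_orthogonal {d : ℕ} (h : PosDefBelow L d) :
    ∃ g : ℝ[X], g.Monic ∧ g.natDegree = d ∧ ∀ j < d, L (g * X ^ j) = 0 := by
  obtain ⟨u, hu⟩ := mulVec_surjective_iff_isUnit.2 h.posDef_hankel.isUnit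
    (fun j : Fin d => -L (X ^ (j + d : ℕ)))
  set r : ℝ[X] := ((degreeLTEquiv ℝ d).symm u : ℝ[X])
  have hru : (fun i : Fin d => r.coeff i) = u := (degreeLTEquiv ℝ d).apply_symm_apply u
  have hr : r.degree < d := mem_degreeLT.1 ((degreeLTEquiv ℝ d).symm u).2
  refine ⟨X ^ d + r, monic_X_pow_add hr, ?_, fun j hj => ?_⟩
  · rw [natDegree_add_eq_left_of_degree_lt (by rwa [degree_X_pow]), natDegree_X_pow]
  have := congrFun hu ⟨j, hj⟩
  rw [← hru, hankel_mulVec_apply hr] at this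
  simp only at this
  rw [add_mul, map_add, ← pow_add, mul_comm, this, add_comm d j]
  ring

noncomputable def modCoeffs (g p : ℝ[X]) : Fin g.natDegree → ℝ :=
  fun i => (p %ₘ g).coeff i

/-- The matrix of multiplication by `X` on `ℝ[X] ⧸ (g)` in the basis `1, X, …, X ^ (deg g - 1)`. -/
noncomputable def companion (g : ℝ[X]) : Matrix (Fin g.natDegree) (Fin g.natDegree) ℝ :=
  Matrix.of fun i j => modCoeffs g (X ^ (j + 1 : ℕ)) i

section Companion

variable {g : ℝ[X]} (hg : g.Monic)
include hg

lemma degree_modByMonic_lt_natDegree (p : ℝ[X]) : (p %ₘ g).degree < g.natDegree := by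
  simpa [degree_eq_natDegree hg.ne_zero] using degree_modByMonic_lt p hg

lemma companion_mulVec_modCoeffs (p : ℝ[X]) :
    companion g *ᵥ modCoeffs g p = modCoeffs g (X * p) := by
  have hX : X * p %ₘ g = ∑ j : Fin g.natDegree, (p %ₘ g).coeff j • (X ^ (j + 1 : ℕ) %ₘ g) :=
    calc X * p %ₘ g = X * (p %ₘ g) %ₘ g :=
          modByMonic_eq_of_dvd_sub hg <| by
            rw [← mul_sub]
            exact dvd_mul_of_dvd_right (dvd_sub_comm.1 (dvd_modByMonic_sub p g)) X
      _ = (∑ j : Fin g.natDegree, (p %ₘ g).coeff j • X ^ (j + 1 : ℕ)) %ₘ g := by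
          conv_lhs => rw [← sum_fin_monomial_coeff (degree_modByMonic_lt_natDegree hg p)]
          simp only [Finset.mul_sum, X_mul_monomial, smul_X_eq_monomial]
      _ = _ := by simp only [← modByMonicHom_apply, map_sum, map_smul]
  ext i
  simp only [companion, modCoeffs, mulVec, dotProduct, of_apply, hX, finsetSum_coeff, coeff_smul,
    smul_eq_mul]
  exact Finset.sum_congr rfl fun j _ => mul_comm _ _

lemma companion_pow_mulVec_modCoeffs_one (k : ℕ) :
    companion g ^ k *ᵥ modCoeffs g 1 = modCoeffs g (X ^ k) := by
  induction k with
  | zero => simp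
  | succ k ih =>
    rw [pow_succ', ← mulVec_mulVec, ih, companion_mulVec_modCoeffs hg, ← pow_succ']

variable (hvan : VanishesOnMultiples L g (2 * g.natDegree))
include hvan

lemma map_modByMonic_mul_modByMonic (p q : ℝ[X]) : L (p %ₘ g * (q %ₘ g)) = L (p * q %ₘ g) := by
  rcases eq_or_ne g 1 with rfl | hg1
  · simp
  have hdvd : g ∣ p %ₘ g * (q %ₘ g) - p * q %ₘ g := by
    rw [mul_modByMonic p q g]
    exact dvd_sub_comm.1 (dvd_modByMonic_sub _ g)
  have hp := natDegree_modByMonic_lt p hg hg1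
  have hq := natDegree_modByMonic_lt q hg hg1
  have hpq := natDegree_modByMonic_lt (p * q) hg hg1
  have hdeg : (p %ₘ g * (q %ₘ g) - p * q %ₘ g).degree < (2 * g.natDegree : ℕ) :=
    degree_le_natDegree.trans_lt <| by
      exact_mod_cast (natDegree_sub_le _ _).trans_lt
        (max_lt (natDegree_mul_le.trans_lt (by omega)) (by omega))
  rw [← sub_eq_zero, ← map_sub]
  exact hvan _ hdvd hdeg

lemma modCoeffs_dotProduct_hankel_mulVec (p q : ℝ[X]) :
    modCoeffs g p ⬝ᵥ hankel L g.natDegree *ᵥ modCoeffs g q = L (p * q %ₘ g) :=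
  (dotProduct_hankel_mulVec (degree_modByMonic_lt_natDegree hg p)
    (degree_modByMonic_lt_natDegree hg q)).trans (map_modByMonic_mul_modByMonic hg hvan p q)

lemma hankel_mul_companion_apply (i j : Fin g.natDegree) :
    (hankel L g.natDegree * companion g) i j = L (X ^ (i + j + 1 : ℕ) %ₘ g) := by
  have hXi : (X ^ (i : ℕ) : ℝ[X]) %ₘ g = X ^ (i : ℕ) :=
    (modByMonic_eq_self_iff hg).2 (by
      rw [degree_X_pow, degree_eq_natDegree hg.ne_zero]; exact_mod_cast i.2)
  calc (hankel L g.natDegree * companion g) i j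
      = (hankel L g.natDegree *ᵥ modCoeffs g (X ^ (j + 1 : ℕ))) i := rfl
    _ = L (X ^ (i : ℕ) %ₘ g * (X ^ (j + 1 : ℕ) %ₘ g)) :=
      (hankel_mulVec_apply (degree_modByMonic_lt_natDegree hg _) i).trans (by rw [hXi])
    _ = L (X ^ (i + j + 1 : ℕ) %ₘ g) := by
      rw [map_modByMonic_mul_modByMonic hg hvan, ← pow_add, add_assoc]

lemma isHermitian_hankel_mul_companion : (hankel L g.natDegree * companion g).IsHermitian :=
  IsHermitian.ext fun i j => by
    rw [star_trivial, hankel_mul_companion_apply hg hvan, hankel_mul_companion_apply hg hvan,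
      add_comm (j : ℕ)]

lemma exists_map_modByMonic_eq_sum (hpd : PosDefBelow L g.natDegree) :
    ∃ x μ : Fin g.natDegree → ℝ, (∀ i, 0 ≤ μ i) ∧
      ∀ p : ℝ[X], L (p %ₘ g) = ∑ i, μ i * p.eval (x i) := by
  obtain ⟨x, μ, hμ, hsum⟩ := hpd.posDef_hankel.exists_dotProduct_mul_pow_mulVec_eq_sum
    (isHermitian_hankel_mul_companion hg hvan) (modCoeffs g 1)
  refine ⟨x, μ, hμ, fun p => ?_⟩
  induction p using Polynomial.induction_on' with
  | add p q hp hq => simp [add_modByMonic, hp, hq, Finset.sum_add_distrib, mul_add]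
  | monomial k a =>
    have hk : L (X ^ k %ₘ g) = ∑ i, μ i * x i ^ k := by
      rw [← hsum k, ← mulVec_mulVec, companion_pow_mulVec_modCoeffs_one hg,
        modCoeffs_dotProduct_hankel_mulVec hg hvan, one_mul]
    rw [← C_mul_X_pow_eq_monomial, ← smul_eq_C_mul, smul_modByMonic, map_smul, hk]
    simp [Finset.mul_sum, mul_left_comm]

end Companion

section Positive

variable {n : ℕ} (hL : ∀ q : ℝ[X], q.natDegree ≤ n → 0 ≤ L (q * q))
include hL

lemma map_mul_eq_zero_of_map_mul_self_eq_zero {q r : ℝ[X]} (hq : q.natDegree ≤ n)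
    (h0 : L (q * q) = 0) (hr : r.natDegree ≤ n) : L (q * r) = 0 := by
  have hquad : ∀ t : ℝ, 0 ≤ L (r * r) * (t * t) + 2 * L (q * r) * t + 0 := by
    intro t
    have hdeg : (t • r + q).natDegree ≤ n :=
      (natDegree_add_le _ _).trans (max_le ((natDegree_smul_le _ _).trans hr) hq)
    have hexp : (t • r + q) * (t • r + q) = (t * t) • (r * r) + (2 * t) • (q * r) + q * q := by
      simp only [smul_eq_C_mul, C_mul, C_ofNat]; ring
    have := hL _ hdeg
    rw [hexp, map_add, map_add, map_smul, map_smul, h0, smul_eq_mul, smul_eq_mul] at this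
    linarith
  have := discrim_le_zero hquad
  rw [discrim] at this
  nlinarith [sq_nonneg (L (r * r)), sq_nonneg (L (q * r))]

lemma map_mul_X_pow_eq_zero_of_map_mul_self_eq_zero {q : ℝ[X]} (hq : q.natDegree ≤ n)
    (h0 : L (q * q) = 0) : ∀ j, j + q.natDegree < 2 * n → L (q * X ^ j) = 0 := by
  intro j
  induction j using Nat.strong_induction_on with
  | _ j ih =>
    intro hj
    by_cases hjn : j ≤ n
    · exact map_mul_eq_zero_of_map_mul_self_eq_zero hL hq h0 (by simpa using hjn)
    -- `Q = X ^ (j - n) * q` has degree `≤ n`, and `L (Q * Q)` involves only shifts of `q` below `j`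
    set t := j - n
    have hQ : (X ^ t * q).natDegree ≤ n := (natDegree_mul_le).trans (by simp; omega)
    have hQQ : L (X ^ t * q * (X ^ t * q)) = 0 := by
      have hdeg : (X ^ (2 * t) * q).degree < (j : WithBot ℕ) :=
        degree_le_natDegree.trans_lt
          (by exact_mod_cast natDegree_mul_le.trans_lt (by rw [natDegree_X_pow]; omega))
      rw [show X ^ t * q * (X ^ t * q) = q * (X ^ (2 * t) * q) by ring]
      exact map_mul_eq_zero_of_forall_X_pow (fun i hi => ih i hi (by omega)) hdeg
    have := map_mul_eq_zero_of_map_mul_self_eq_zero hL hQ hQQ (r := X ^ n) (by simp)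
    rwa [show X ^ t * q * X ^ n = q * X ^ j by rw [show j = t + n by omega, pow_add]; ring] at this

lemma map_nonneg_of_monic_of_dvd {g f : ℝ[X]} (hg : g.Monic) (hgn : g.natDegree ≤ n)
    (hvan : VanishesOnMultiples L g (2 * n)) (hf : f.Monic) (hfn : f.natDegree = 2 * n)
    (hgf : g ∣ f) : 0 ≤ L f := by
  set h := X ^ (n - g.natDegree) * g
  have hh : h.Monic := (monic_X_pow _).mul hg
  have hhn : h.natDegree = n := by
    rw [(monic_X_pow _).natDegree_mul hg, natDegree_X_pow]; omega
  have hhh : (h * h).natDegree = 2 * n := by rw [hh.natDegree_mul hh, hhn, two_mul]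
  have hlt : (h * h - f).degree < (2 * n : ℕ) := by
    have := degree_sub_lt_left (p := h * h) (q := f)
      (by rw [degree_eq_natDegree (hh.mul hh).ne_zero, degree_eq_natDegree hf.ne_zero, hhh, hfn])
      (hh.mul hh).ne_zero (by rw [(hh.mul hh).leadingCoeff, hf.leadingCoeff])
    rwa [degree_eq_natDegree (hh.mul hh).ne_zero, hhh] at this
  have hdvd : g ∣ h * h - f := dvd_sub (dvd_mul_of_dvd_left (dvd_mul_left g _) h) hgf
  have := hL h hhn.le
  linarith [hvan _ hdvd hlt, map_sub L (h * h) f]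

lemma exists_monic_map_mul_self_eq_zero {d : ℕ} (hdn : d ≤ n) (hd : PosDefBelow L d)
    (hd' : ¬ PosDefBelow L (d + 1)) : ∃ g : ℝ[X], g.Monic ∧ g.natDegree = d ∧ L (g * g) = 0 := by
  simp only [PosDefBelow, not_forall, not_lt] at hd'
  obtain ⟨q, hq0, hqd, hqq⟩ := hd'
  have hq : L (q * q) = 0 := le_antisymm hqq (hL q (by omega))
  have hqdeg : q.natDegree = d := by
    by_contra hne
    exact (hd q hq0 (by omega)).not_ge hqq
  have hc : q.leadingCoeff ≠ 0 := leadingCoeff_ne_zero.2 hq0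
  refine ⟨C q.leadingCoeff⁻¹ * q, monic_C_mul_of_mul_leadingCoeff_eq_one (inv_mul_cancel₀ hc),
    by rw [natDegree_C_mul (inv_ne_zero hc), hqdeg], ?_⟩
  rw [show C q.leadingCoeff⁻¹ * q * (C q.leadingCoeff⁻¹ * q) = q.leadingCoeff⁻¹ ^ 2 • (q * q) by
    rw [smul_eq_C_mul, C_pow]; ring, map_smul, hq, smul_zero]

lemma exists_monic_vanishesOnMultiples :
    ∃ g : ℝ[X], g.Monic ∧ g.natDegree ≤ n ∧ PosDefBelow L g.natDegree ∧
      VanishesOnMultiples L g (2 * n) := by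
  classical
  set d := Nat.findGreatest (PosDefBelow L) n
  have hd : PosDefBelow L d :=
    Nat.findGreatest_spec (P := PosDefBelow L) (Nat.zero_le n) fun _ _ h =>
      absurd h (Nat.not_lt_zero _)
  have hdn : d ≤ n := Nat.findGreatest_le n
  rcases hdn.lt_or_eq with hlt | heq
  · obtain ⟨g, hg, hgd, hgg⟩ := exists_monic_map_mul_self_eq_zero hL hdn hd
      (Nat.findGreatest_is_greatest (Nat.lt_succ_self d) hlt)
    exact ⟨g, hg, hgd ▸ hdn, hgd ▸ hd, vanishesOnMultiples_of_forall_X_pow hg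
      (map_mul_X_pow_eq_zero_of_map_mul_self_eq_zero hL (hgd ▸ hdn) hgg)⟩
  · obtain ⟨g, hg, hgd, horth⟩ := hd.exists_monic_orthogonal
    exact ⟨g, hg, hgd ▸ hdn, hgd ▸ hd, vanishesOnMultiples_of_forall_X_pow hg
      fun j hj => horth j (by omega)⟩

theorem exists_quadrature :
    ∃ (F : Finset ℝ) (w : ℝ → ℝ), F.card ≤ n ∧ (∀ t ∈ F, 0 < w t) ∧
      (∀ p : ℝ[X], p.degree < (2 * n : ℕ) → L p = ∑ t ∈ F, w t * p.eval t) ∧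
      ∑ t ∈ F, w t * t ^ (2 * n) ≤ L (X ^ (2 * n)) := by
  obtain ⟨g, hg, hgn, hpd, hvan⟩ := exists_monic_vanishesOnMultiples hL
  obtain ⟨x, μ, hμ, hQ⟩ := exists_map_modByMonic_eq_sum hg (hvan.mono (by omega)) hpd
  obtain ⟨F, w, hF, hw, hsum⟩ := exists_finset_sum_mul_eq_of_nonneg x μ hμ
  have hsplit : ∀ p, L p = ∑ t ∈ F, w t * p.eval t + L (p - p %ₘ g) := fun p => by
    rw [← hsum, ← hQ, map_sub, add_sub_cancel]
  have hdvd : ∀ p, g ∣ p - p %ₘ g := fun p => dvd_sub_comm.1 (dvd_modByMonic_sub p g)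
  have hmod : ∀ p, (p %ₘ g).degree < (2 * n : ℕ) := fun p =>
    (degree_modByMonic_lt p hg).trans_le
      (by rw [degree_eq_natDegree hg.ne_zero]; exact_mod_cast (by omega : g.natDegree ≤ 2 * n))
  refine ⟨F, w, hF.trans (by simpa using hgn), hw, fun p hp => ?_, ?_⟩
  · rw [hsplit p, hvan _ (hdvd p) ((degree_sub_le _ _).trans_lt (max_lt hp (hmod p))), add_zero]
  · have hdeg : (X ^ (2 * n) %ₘ g : ℝ[X]).degree < (X ^ (2 * n) : ℝ[X]).degree := by
      rw [degree_X_pow]; exact hmod _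
    have hM := map_nonneg_of_monic_of_dvd hL hg hgn hvan ((monic_X_pow _).sub_of_left hdeg)
      (natDegree_eq_of_degree_eq_some (by rw [degree_sub_eq_left_of_degree_lt hdeg, degree_X_pow]))
      (hdvd _)
    rw [hsplit (X ^ (2 * n))]
    simpa using hM

end Positive

end MomentProblem

open MomentProblem in
/-- **Discrete moment problem (Ahiezer–Krein).** If the `m × m` Hankel matrix built from
`s₀, …, s_{2m−2}` is positive semidefinite, then the sequence admits a representation
`s_k = Σ_{i<p} μᵢ xᵢᵏ` for `k ≤ 2m−3` with `p ≤ m−1`, distinct nodes `xᵢ`, positive weights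
`μᵢ`, and `s_{2m−2} = Σ_{i<p} μᵢ xᵢ^{2m−2} + M` with `M ≥ 0`. -/
theorem hankel_moment_representation (m : ℕ) (hm : 1 ≤ m) (s : ℕ → ℝ)
    (hK : (Matrix.of fun i j : Fin m => s ((i : ℕ) + (j : ℕ))).PosSemidef) :
    ∃ (p : ℕ) (x μ : ℕ → ℝ) (M : ℝ),
      p ≤ m - 1 ∧
      (∀ i < p, ∀ j < p, i ≠ j → x i ≠ x j) ∧
      (∀ i < p, 0 < μ i) ∧
      0 ≤ M ∧
      (∀ k < 2 * m - 2, s k = ∑ i ∈ Finset.range p, μ i * x i ^ k) ∧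
      s (2 * m - 2) = (∑ i ∈ Finset.range p, μ i * x i ^ (2 * m - 2)) + M := by
  obtain ⟨n, rfl⟩ : ∃ n, m = n + 1 := ⟨m - 1, by omega⟩
  have hK' : (hankel (rieszFunctional s) (n + 1)).PosSemidef := by
    convert hK using 1
    ext i j
    simp [hankel]
  obtain ⟨F, w, hF, hw, hexact, htop⟩ := exists_quadrature fun q hq =>
    map_mul_self_nonneg_of_posSemidef hK'
      (degree_le_natDegree.trans_lt (by exact_mod_cast Nat.lt_succ_of_le hq))
  obtain ⟨x, hinj, hmem, hsum⟩ := F.exists_enumeration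
  have h2 : 2 * (n + 1) - 2 = 2 * n := by omega
  refine ⟨F.card, x, fun i => w (x i), s (2 * n) - ∑ t ∈ F, w t * t ^ (2 * n), by omega, hinj,
    fun i hi => hw _ (hmem i hi), ?_, fun k hk => ?_, ?_⟩
  · simpa using htop
  · rw [hsum fun t => w t * t ^ k, ← rieszFunctional_X_pow s k,
      hexact _ (by rw [degree_X_pow]; exact_mod_cast (by omega : k < 2 * n))]
    simp only [eval_X_pow]
  · rw [h2, hsum (fun t => w t * t ^ (2 * n))]
    ring
end

section
/- Let h, k ∈ ℝⁿ, let p ≥ 1, let x₀ < x₁ < … < x_{p−1} be nonnegative reals with 2p ≤ n+1 and with x₀ = 0 in case 2p = n+1, and let μ₀, …, μ_{p−1} be positive reals. Set Z = Σ_{i=0}^{p−1} μᵢ·Z(xᵢ), ξ = S·Z·g + Z·h, and ξᵢ = S·Z(xᵢ)·g + Z(xᵢ)·h for each i. Then ⟨ξ, Z⁺·ξ⟩ = Σ_{i=0}^{p−1} μᵢ·⟨ξᵢ, Z(xᵢ)⁺·ξᵢ⟩ and ⟨h−k, ξ⟩ = Σ_{i=0}^{p−1} μᵢ·⟨h−k,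 ξᵢ⟩; in particular, if ⟨h−k, ξ⟩ ≠ 0 then ⟨ξ, Z⁺·ξ⟩ / ⟨h−k, ξ⟩ = (Σ_{i=0}^{p−1} μᵢ·⟨ξᵢ, Z(xᵢ)⁺·ξᵢ⟩) / (Σ_{i=0}^{p−1} μᵢ·⟨h−k, ξᵢ⟩). -/
open Matrix

/-- The signed Hankel rank-two matrix `Z(x)`: in 0-based indexing, the `(i,j)` entry is `0`
if `i+j` is odd and `(−1)^{(i−j)/2} x^{(i+j)/2}` if `i+j` is even. -/
noncomputable def Zxmat (n : ℕ) (x : ℝ) : Matrix (Fin n) (Fin n) ℝ :=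
  Matrix.of fun i j =>
    if ((i : ℕ) + (j : ℕ)) % 2 = 1 then 0
    else (-1 : ℝ) ^ (((i : ℤ) - (j : ℤ)) / 2) * x ^ (((i : ℕ) + (j : ℕ)) / 2)

/-! There is a single vector `w` with `Z(xᵢ) w = S Z(xᵢ) g` for every node, so
`ξᵢ = Z(xᵢ) (w + h)` and, by linearity, `ξ = Z (w + h)`. For a symmetric `Z` with `Z Z⁺ Z = Z`
one has `⟨Z u, Z⁺ Z u⟩ = ⟨u, Z u⟩`, which is linear in `Z`, as is `⟨h − k, Z u⟩`.

With `n = 2m + ε`, take `w_{2s+ε} = (−1)ˢ cₛ` (and `0` at the other parity), where `cₛ` are the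
coefficients of a polynomial `P` of degree `< m`: row `2r + ε` of `Z(t) w` is
`(−1)ʳ t^{r+ε} P(t)`, while that of `S Z(t) g` is `(−1)^{r+m+1} t^{r+m+ε}`. So it suffices that
`P(t) = −(−1)ᵐ tᵐ` at every node, except at `t = 0` when `ε = 1`; by Lagrange interpolation this
is possible because `2p ≤ n + 1` leaves at most `m` nodes to fit. -/

open Polynomial Finset

lemma neg_one_zpow_eq_of_emod_two_eq {R : Type*} [DivisionRing R] {a b : ℤ}
    (h : a % 2 = b % 2) : (-1 : R) ^ a = (-1) ^ b := by
  obtain ⟨c, rfl⟩ : ∃ c, a = b + 2 * c := ⟨(a - b) / 2, by omega⟩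
  rw [zpow_add₀ (by norm_num), _root_.zpow_mul]
  norm_num

lemma neg_one_pow_eq_of_mod_two_eq {R : Type*} [Ring R] {a b : ℕ}
    (h : a % 2 = b % 2) : (-1 : R) ^ a = (-1) ^ b := by
  rw [neg_one_pow_eq_pow_mod_two (R := R), h, ← neg_one_pow_eq_pow_mod_two]

lemma Zxmat_apply_of_odd {n : ℕ} (t : ℝ) {i j : Fin n} (h : ((i : ℕ) + j) % 2 = 1) :
    Zxmat n t i j = 0 :=
  if_pos h

lemma Zxmat_apply_of_even {n : ℕ} (t : ℝ) {i j : Fin n} (h : ((i : ℕ) + j) % 2 = 0) :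
    Zxmat n t i j = (-1) ^ (((i : ℕ) + j) / 2 + j) * t ^ (((i : ℕ) + j) / 2) := by
  rw [Zxmat, of_apply, if_neg (by omega), ← zpow_natCast (-1 : ℝ)]
  congr 1
  exact neg_one_zpow_eq_of_emod_two_eq (by push_cast; omega)

lemma isSymm_Zxmat (n : ℕ) (t : ℝ) : (Zxmat n t).IsSymm := by
  refine IsSymm.ext fun i j => ?_
  rcases Nat.mod_two_eq_zero_or_one ((i : ℕ) + j) with h | h
  · rw [Zxmat_apply_of_even t h, Zxmat_apply_of_even t (by omega), add_comm (j : ℕ)]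
    congr 1
    exact neg_one_pow_eq_of_mod_two_eq (by omega)
  · rw [Zxmat_apply_of_odd t h, Zxmat_apply_of_odd t (by omega)]

lemma Smat_mulVec_apply {n : ℕ} (v : Fin n → ℝ) (a : Fin n) :
    (Smat n *ᵥ v) a = if h : (a : ℕ) + 1 < n then v ⟨a + 1, h⟩ else 0 := by
  simp only [mulVec, dotProduct, Smat, of_apply, ite_mul, one_mul, zero_mul]
  split_ifs with h
  · rw [Fintype.sum_eq_single ⟨a + 1, h⟩ fun j hj => if_neg fun h' => hj (Fin.ext h'.symm),
      if_pos rfl]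
  · exact Finset.sum_eq_zero fun j _ => if_neg (by omega)

lemma mulVec_gvec_apply {n : ℕ} (M : Matrix (Fin n) (Fin n) ℝ) (a : Fin n) :
    (M *ᵥ gvec n) a = M a ⟨n - 1, Nat.sub_one_lt a.pos.ne'⟩ := by
  simp only [mulVec, dotProduct, gvec, mul_ite, mul_one, mul_zero]
  rw [Fintype.sum_eq_single ⟨n - 1, Nat.sub_one_lt a.pos.ne'⟩
    fun j hj => if_neg fun h' => hj (Fin.ext h'), if_pos rfl]

lemma Fin.sum_univ_eq_sum_half_of_mod_two_ne {M : Type*} [AddCommMonoid M] {n : ℕ}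
    (F : Fin n → M) (hF : ∀ j : Fin n, (j : ℕ) % 2 ≠ n % 2 → F j = 0) :
    ∑ j, F j = ∑ s : Fin (n / 2), F ⟨2 * s + n % 2, by omega⟩ := by
  symm
  refine Fintype.sum_of_injective (fun s : Fin (n / 2) => (⟨2 * s + n % 2, by omega⟩ : Fin n))
    (fun s s' h => Fin.ext (by have := congrArg Fin.val h; simp only at this; omega)) _ _
    (fun j hj => hF j fun hpar => hj ⟨⟨j / 2, by omega⟩, Fin.ext (by simp only; omega)⟩)
    fun _ => rfl

noncomputable def coeffVec (n : ℕ) (P : ℝ[X]) : Fin n → ℝ :=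
  fun j => if (j : ℕ) % 2 = n % 2 then (-1) ^ ((j : ℕ) / 2) * P.coeff ((j : ℕ) / 2) else 0

lemma Zxmat_mulVec_coeffVec_apply_of_mod_two_eq {n : ℕ} (t : ℝ) {P : ℝ[X]}
    (hP : P.degree < ↑(n / 2)) {a : Fin n} (ha : (a : ℕ) % 2 = n % 2) :
    (Zxmat n t *ᵥ coeffVec n P) a =
      (-1) ^ ((a : ℕ) / 2) * t ^ ((a : ℕ) / 2 + n % 2) * P.eval t := by
  have hPn : P.natDegree < n / 2 := by
    rcases eq_or_ne P 0 with rfl | hP0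
    · rw [natDegree_zero]; omega
    · exact (natDegree_lt_iff_degree_lt hP0).2 hP
  obtain ⟨r, hr⟩ : ∃ r, (a : ℕ) = 2 * r + n % 2 := ⟨a / 2, by omega⟩
  rw [eval_eq_sum_range' hPn, ← Fin.sum_univ_eq_sum_range (fun s => P.coeff s * t ^ s), mul_sum,
    mulVec, dotProduct, Fin.sum_univ_eq_sum_half_of_mod_two_ne]
  · refine Fintype.sum_congr _ _ fun s => ?_
    have hsign : (-1 : ℝ) ^ (s : ℕ) * (-1) ^ (s : ℕ) = 1 := by rw [← mul_pow]; norm_num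
    rw [Zxmat_apply_of_even t (by simp only; omega), coeffVec, if_pos (by simp only; omega)]
    simp only
    rw [show (a : ℕ) / 2 = r by omega, show (2 * s + n % 2) / 2 = (s : ℕ) by omega,
      show ((a : ℕ) + (2 * s + n % 2)) / 2 = r + s + n % 2 by omega,
      neg_one_pow_eq_of_mod_two_eq
        (show (r + s + n % 2 + (2 * s + n % 2)) % 2 = (r + s) % 2 by omega),
      pow_add, pow_add, pow_add]
    linear_combination (-1) ^ r * t ^ r * t ^ (s : ℕ) * t ^ (n % 2) * P.coeff s * hsign
  · intro j hj
    rw [coeffVec, if_neg hj, mul_zero]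

lemma Zxmat_mulVec_coeffVec {n : ℕ} {t : ℝ} {P : ℝ[X]} (hP : P.degree < ↑(n / 2))
    (ht : t ^ (n % 2) * (P.eval t + (-1) ^ (n / 2) * t ^ (n / 2)) = 0) :
    Zxmat n t *ᵥ coeffVec n P = (Smat n * Zxmat n t) *ᵥ gvec n := by
  funext a
  rw [← mulVec_mulVec, Smat_mulVec_apply]
  by_cases ha : (a : ℕ) % 2 = n % 2
  · obtain ⟨r, hr⟩ : ∃ r, (a : ℕ) = 2 * r + n % 2 := ⟨a / 2, by omega⟩
    rw [dif_pos (by omega), mulVec_gvec_apply, Zxmat_apply_of_even t (by simp only; omega),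
      Zxmat_mulVec_coeffVec_apply_of_mod_two_eq t hP ha]
    simp only
    rw [show ((a : ℕ) + 1 + (n - 1)) / 2 = r + n / 2 + n % 2 by omega,
      neg_one_pow_eq_of_mod_two_eq
        (show (r + n / 2 + n % 2 + (n - 1)) % 2 = (r + n / 2 + 1) % 2 by omega),
      show (a : ℕ) / 2 = r by omega]
    simp only [pow_add]
    linear_combination (-1) ^ r * t ^ r * ht
  · rw [mulVec, dotProduct, Finset.sum_eq_zero fun j _ => ?_]
    · split_ifs with h
      · rw [mulVec_gvec_apply, Zxmat_apply_of_odd t (by simp only; omega)]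
      · rfl
    · by_cases hj : (j : ℕ) % 2 = n % 2
      · rw [Zxmat_apply_of_odd t (by omega), zero_mul]
      · rw [coeffVec, if_neg hj, mul_zero]

lemma exists_degree_lt_eval_eq {R : Type*} [Field R] [DecidableEq R] (s : Finset R) (f : R → R)
    {m : ℕ} (hs : #s ≤ m) : ∃ P : R[X], P.degree < m ∧ ∀ t ∈ s, P.eval t = f t :=
  ⟨Lagrange.interpolate s id f,
    (Lagrange.degree_interpolate_lt _ (Set.injOn_id _)).trans_le (by exact_mod_cast hs),
    fun _ ht => Lagrange.eval_interpolate_at_node _ (Set.injOn_id _) ht⟩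

lemma exists_degree_lt_pow_mul_eval_add_eq_zero {n p : ℕ} {x : ℕ → ℝ} (hpn : 2 * p ≤ n + 1)
    (hedge : 2 * p = n + 1 → x 0 = 0) :
    ∃ P : ℝ[X], P.degree < ↑(n / 2) ∧
      ∀ i < p, x i ^ (n % 2) * (P.eval (x i) + (-1) ^ (n / 2) * x i ^ (n / 2)) = 0 := by
  have hcard : #((range p).image x) ≤ p := card_image_le.trans (card_range p).le
  have hmem : ∀ i < p, x i ∈ (range p).image x := fun i hi => mem_image_of_mem x (mem_range.2 hi)
  set target : ℝ → ℝ := fun t => -(-1) ^ (n / 2) * t ^ (n / 2)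
  rcases Nat.mod_two_eq_zero_or_one n with heven | hodd
  · obtain ⟨P, hdeg, hP⟩ := exists_degree_lt_eval_eq (m := n / 2) _ target (hcard.trans (by omega))
    refine ⟨P, hdeg, fun i hi => ?_⟩
    rw [hP _ (hmem i hi)]
    ring
  · have hcard' : #(((range p).image x).erase 0) ≤ n / 2 := by
      by_cases hp : 2 * p = n + 1
      · rw [card_erase_of_mem (hedge hp ▸ hmem 0 (by omega))]
        omega
      · exact card_erase_le.trans (hcard.trans (by omega))
    obtain ⟨P, hdeg, hP⟩ := exists_degree_lt_eval_eq _ target hcard'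
    refine ⟨P, hdeg, fun i hi => ?_⟩
    rcases eq_or_ne (x i) 0 with h0 | h0
    · rw [h0, hodd, pow_one, zero_mul]
    · rw [hP _ (mem_erase.2 ⟨h0, hmem i hi⟩)]
      ring

lemma Matrix.IsSymm.mulVec_dotProduct_mulVec_mulVec {ι R : Type*} [Fintype ι] [CommSemiring R]
    {N P : Matrix ι ι R} (hN : N.IsSymm) (hNPN : N * P * N = N) (u : ι → R) :
    N *ᵥ u ⬝ᵥ P *ᵥ (N *ᵥ u) = u ⬝ᵥ N *ᵥ u := by
  have hsymm : N *ᵥ u = u ᵥ* N := by rw [← mulVec_transpose, hN.eq]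
  nth_rw 1 [hsymm]
  rw [dotProduct_mulVec, vecMul_vecMul, ← dotProduct_mulVec, mulVec_mulVec, hNPN]

lemma Matrix.isSymm_sum {ι m α : Type*} [AddCommMonoid α] (s : Finset ι)
    {A : ι → Matrix m m α} (hA : ∀ i ∈ s, (A i).IsSymm) : (∑ i ∈ s, A i).IsSymm :=
  (transpose_sum s A).trans (sum_congr rfl hA)

lemma Matrix.sum_smul_mulVec_eq_mul_sum_smul_mulVec {ι m R : Type*} [Fintype m] [CommSemiring R]
    (s : Finset ι) (μ : ι → R) {M : ι → Matrix m m R} {A : Matrix m m R} {w v : m → R}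
    (h : ∀ i ∈ s, M i *ᵥ w = (A * M i) *ᵥ v) :
    (∑ i ∈ s, μ i • M i) *ᵥ w = (A * ∑ i ∈ s, μ i • M i) *ᵥ v := by
  rw [Matrix.mul_sum, sum_mulVec, sum_mulVec]
  refine sum_congr rfl fun i hi => ?_
  rw [Matrix.mul_smul, smul_mulVec, smul_mulVec, h i hi]

lemma Matrix.dotProduct_sum_smul_mulVec {ι m R : Type*} [Fintype m] [CommSemiring R]
    (s : Finset ι) (μ : ι → R) (M : ι → Matrix m m R) (v u : m → R) :
    v ⬝ᵥ (∑ i ∈ s, μ i • M i) *ᵥ u = ∑ i ∈ s, μ i * (v ⬝ᵥ M i *ᵥ u) := by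
  simp only [sum_mulVec, dotProduct_sum, smul_mulVec, dotProduct_smul, smul_eq_mul]

theorem F_additive_on_moment_decomposition_general {n : ℕ} (h k : Fin n → ℝ)
    (p : ℕ) (x μ : ℕ → ℝ)
    (hpn : 2 * p ≤ n + 1) (hedge : 2 * p = n + 1 → x 0 = 0)
    (Z : Matrix (Fin n) (Fin n) ℝ) (hZdef : Z = ∑ i ∈ Finset.range p, μ i • Zxmat n (x i))
    (ξ : Fin n → ℝ) (hξ : ξ = (Smat n * Z).mulVec (gvec n) + Z.mulVec h)
    (ξi : ℕ → Fin n → ℝ)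
    (hξi : ∀ i, ξi i = (Smat n * Zxmat n (x i)).mulVec (gvec n) + (Zxmat n (x i)).mulVec h)
    (Zp : Matrix (Fin n) (Fin n) ℝ) (hZp : IsMoorePenroseInv Z Zp)
    (Zpi : ℕ → Matrix (Fin n) (Fin n) ℝ)
    (hZpi : ∀ i < p, IsMoorePenroseInv (Zxmat n (x i)) (Zpi i)) :
    ξ ⬝ᵥ Zp.mulVec ξ = ∑ i ∈ Finset.range p, μ i * (ξi i ⬝ᵥ (Zpi i).mulVec (ξi i)) ∧
    (h - k) ⬝ᵥ ξ = ∑ i ∈ Finset.range p, μ i * ((h - k) ⬝ᵥ ξi i) ∧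
    ((h - k) ⬝ᵥ ξ ≠ 0 →
      (ξ ⬝ᵥ Zp.mulVec ξ) / ((h - k) ⬝ᵥ ξ) =
        (∑ i ∈ Finset.range p, μ i * (ξi i ⬝ᵥ (Zpi i).mulVec (ξi i))) /
          (∑ i ∈ Finset.range p, μ i * ((h - k) ⬝ᵥ ξi i))) := by
  obtain ⟨P, hPdeg, hPnodes⟩ := exists_degree_lt_pow_mul_eval_add_eq_zero hpn hedge
  have hw : ∀ i ∈ range p,
      Zxmat n (x i) *ᵥ coeffVec n P = (Smat n * Zxmat n (x i)) *ᵥ gvec n :=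
    fun i hi => Zxmat_mulVec_coeffVec hPdeg (hPnodes i (mem_range.1 hi))
  set u := coeffVec n P + h
  have hξi_eq : ∀ i ∈ range p, ξi i = Zxmat n (x i) *ᵥ u := fun i hi => by
    rw [hξi, mulVec_add, hw i hi]
  have hξ_eq : ξ = Z *ᵥ u := by
    rw [hξ, mulVec_add, hZdef, sum_smul_mulVec_eq_mul_sum_smul_mulVec _ μ hw]
  have hZsymm : Z.IsSymm := by
    rw [hZdef]
    exact isSymm_sum _ fun i _ => (isSymm_Zxmat n (x i)).smul (μ i)
  have hnum : ξ ⬝ᵥ Zp *ᵥ ξ = ∑ i ∈ range p, μ i * (ξi i ⬝ᵥ Zpi i *ᵥ ξi i) := by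
    rw [hξ_eq, hZsymm.mulVec_dotProduct_mulVec_mulVec hZp.1, hZdef, dotProduct_sum_smul_mulVec]
    refine sum_congr rfl fun i hi => ?_
    rw [hξi_eq i hi,
      (isSymm_Zxmat n (x i)).mulVec_dotProduct_mulVec_mulVec (hZpi i (mem_range.1 hi)).1]
  have hden : (h - k) ⬝ᵥ ξ = ∑ i ∈ range p, μ i * ((h - k) ⬝ᵥ ξi i) := by
    rw [hξ_eq, hZdef, dotProduct_sum_smul_mulVec]
    exact sum_congr rfl fun i hi => by rw [hξi_eq i hi]
  exact ⟨hnum, hden, fun _ => by rw [hnum, hden]⟩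

/-- **Additivity of `F` on moment decompositions.** For `Z = Σ μᵢ Z(xᵢ)`,
`ξ = S·Z·g + Z·h` and `ξᵢ = S·Z(xᵢ)·g + Z(xᵢ)·h`, both the numerator `⟨ξ, Z⁺ξ⟩` and
denominator `⟨h−k, ξ⟩` of `F(Z)` split as sums over the components; hence so does `F(Z)`. -/
theorem F_additive_on_moment_decomposition {n : ℕ} (hn : 0 < n) (h k : Fin n → ℝ)
    (p : ℕ) (hp : 1 ≤ p) (x μ : ℕ → ℝ)
    (hx0 : 0 ≤ x 0) (hxmono : ∀ i j : ℕ, i < j → j < p → x i < x j)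
    (hpn : 2 * p ≤ n + 1) (hedge : 2 * p = n + 1 → x 0 = 0)
    (hμ : ∀ i < p, 0 < μ i)
    (Z : Matrix (Fin n) (Fin n) ℝ) (hZdef : Z = ∑ i ∈ Finset.range p, μ i • Zxmat n (x i))
    (ξ : Fin n → ℝ) (hξ : ξ = (Smat n * Z).mulVec (gvec n) + Z.mulVec h)
    (ξi : ℕ → Fin n → ℝ)
    (hξi : ∀ i, ξi i = (Smat n * Zxmat n (x i)).mulVec (gvec n) + (Zxmat n (x i)).mulVec h)
    (Zp : Matrix (Fin n) (Fin n) ℝ) (hZp : IsMoorePenroseInv Z Zp)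
    (Zpi : ℕ → Matrix (Fin n) (Fin n) ℝ)
    (hZpi : ∀ i < p, IsMoorePenroseInv (Zxmat n (x i)) (Zpi i)) :
    ξ ⬝ᵥ Zp.mulVec ξ = ∑ i ∈ Finset.range p, μ i * (ξi i ⬝ᵥ (Zpi i).mulVec (ξi i)) ∧
    (h - k) ⬝ᵥ ξ = ∑ i ∈ Finset.range p, μ i * ((h - k) ⬝ᵥ ξi i) ∧
    ((h - k) ⬝ᵥ ξ ≠ 0 →
      (ξ ⬝ᵥ Zp.mulVec ξ) / ((h - k) ⬝ᵥ ξ) =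
        (∑ i ∈ Finset.range p, μ i * (ξi i ⬝ᵥ (Zpi i).mulVec (ξi i))) /
          (∑ i ∈ Finset.range p, μ i * ((h - k) ⬝ᵥ ξi i))) :=
  F_additive_on_moment_decomposition_general h k p x μ hpn hedge Z hZdef ξ hξ ξi hξi Zp hZp Zpi hZpi
end

section
/- For every real x ≥ 0 and every n ≥ 1, the matrix Z(x) satisfies Z(x) = u(x)·u(x)ᵀ + x·v(x)·v(x)ᵀ; consequently Z(x) is positive semidefinite with rank at most 2, and for x > 0 and n ≥ 2 its rank equals 2. -/
open Matrix

/-- `u(x) ∈ ℝⁿ`: in 0-based indexing, even entries `u(x)_{2j} = (−x)^j`, odd entries `0`. -/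
def uvec (n : ℕ) (x : ℝ) : Fin n → ℝ :=
  fun i => if (i : ℕ) % 2 = 0 then (-x) ^ ((i : ℕ) / 2) else 0

/-- `v(x) = Sᵀ·u(x)`. -/
def vvec (n : ℕ) (x : ℝ) : Fin n → ℝ := (Smat n)ᵀ.mulVec (uvec n x)

/-!
For `i = 2a`, `j = 2b` the entry `(-1)^(a-b) x^(a+b)` of `Z(x)` equals `(-x)^a (-x)^b = u_i u_j`,
and for `i = 2a+1`, `j = 2b+1` it equals `x (-x)^a (-x)^b = x v_i v_j`; entries of mixed parity
vanish on both sides. So `Z(x)` is a sum of two rank-one Gram matrices, positive semidefinite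
for `x ≥ 0`. Its leading `2 × 2` block is `diag(1, x)`, which forces rank `2` when `x > 0`.
-/

theorem Matrix.rank_add_le {K m n : Type*} [Field K] [Finite m] [Fintype n]
    (A B : Matrix m n K) : (A + B).rank ≤ A.rank + B.rank := by
  rw [Matrix.rank, mulVecLin_add]
  exact (Submodule.finrank_mono (LinearMap.range_add_le _ _)).trans
    (Submodule.finrank_add_le_finrank_add_finrank _ _)

theorem Matrix.rank_vecMulVec_add_vecMulVec_le {K m n : Type*} [Field K] [Finite m] [Fintype n]
    (a b : m → K) (c d : n → K) : (vecMulVec a c + vecMulVec b d).rank ≤ 2 :=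
  (rank_add_le _ _).trans (add_le_add (rank_vecMulVec_le a c) (rank_vecMulVec_le b d))

lemma neg_one_zpow_natCast_sub_natCast {α : Type*} [DivisionRing α] (a b : ℕ) :
    (-1 : α) ^ ((a : ℤ) - b) = (-1) ^ (a + b) := by
  rw [zpow_natCast_sub_natCast₀ (neg_ne_zero.mpr one_ne_zero), pow_add, div_eq_mul_inv,
    ← inv_pow, inv_neg_one]

lemma Smat_transpose_mulVec_apply {n : ℕ} (w : Fin n → ℝ) (i : Fin n) :
    ((Smat n)ᵀ *ᵥ w) i = if h : (i : ℕ) = 0 then 0 else w ⟨i - 1, by omega⟩ := by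
  simp only [mulVec, dotProduct, transpose_apply, Smat, of_apply, ite_mul, one_mul, zero_mul]
  split_ifs with h
  · exact Finset.sum_eq_zero fun j _ => if_neg (by omega)
  · rw [Finset.sum_eq_single_of_mem ⟨i - 1, by omega⟩ (Finset.mem_univ _)
      fun j _ hj => if_neg fun hji => hj (Fin.ext (by simp; omega)), if_pos (by simp; omega)]

lemma vvec_apply {n : ℕ} (x : ℝ) (i : Fin n) :
    vvec n x i = if (i : ℕ) % 2 = 1 then (-x) ^ ((i : ℕ) / 2) else 0 := by
  rw [vvec, Smat_transpose_mulVec_apply, uvec]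
  split_ifs <;> (try dsimp only at *) <;> first | rfl | omega | (congr 1; omega)

lemma Zxmat_apply {n : ℕ} (x : ℝ) (i j : Fin n) :
    Zxmat n x i j = uvec n x i * uvec n x j + x * (vvec n x i * vvec n x j) := by
  rw [Zxmat, of_apply, uvec, uvec, vvec_apply, vvec_apply]
  obtain ⟨a, ha | ha⟩ := Nat.even_or_odd' (i : ℕ) <;>
    obtain ⟨b, hb | hb⟩ := Nat.even_or_odd' (j : ℕ) <;>
    simp only [ha, hb] <;> norm_num
  · rw [show (2 * (a : ℤ) - 2 * b) / 2 = a - b by omega, show (2 * a + 2 * b) / 2 = a + b by omega,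
      neg_one_zpow_natCast_sub_natCast, neg_pow, neg_pow]
    ring
  · rw [if_neg (by omega), show (2 * (a : ℤ) - 2 * b) / 2 = a - b by omega,
      show (2 * a + 1 + (2 * b + 1)) / 2 = a + b + 1 by omega, show (2 * a + 1) / 2 = a by omega,
      show (2 * b + 1) / 2 = b by omega, neg_one_zpow_natCast_sub_natCast, neg_pow, neg_pow]
    ring

lemma Zxmat_eq (n : ℕ) (x : ℝ) :
    Zxmat n x = vecMulVec (uvec n x) (uvec n x) + x • vecMulVec (vvec n x) (vvec n x) := by
  ext i j
  rw [Zxmat_apply, Matrix.add_apply, Matrix.smul_apply, vecMulVec_apply, vecMulVec_apply,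
    smul_eq_mul]

lemma Zxmat_posSemidef (n : ℕ) {x : ℝ} (hx : 0 ≤ x) : (Zxmat n x).PosSemidef := by
  have hgram (w : Fin n → ℝ) : (vecMulVec w w).PosSemidef := by
    simpa using posSemidef_vecMulVec_self_star w
  rw [Zxmat_eq]
  exact (hgram _).add ((hgram _).smul hx)

lemma Zxmat_rank_le_two (n : ℕ) (x : ℝ) : (Zxmat n x).rank ≤ 2 := by
  rw [Zxmat_eq, ← smul_vecMulVec]
  exact rank_vecMulVec_add_vecMulVec_le _ _ _ _

lemma Zxmat_submatrix_castLE {k n : ℕ} (h : k ≤ n) (x : ℝ) :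
    (Zxmat n x).submatrix (Fin.castLE h) (Fin.castLE h) = Zxmat k x := by
  ext i j
  simp [Zxmat]

lemma Zxmat_two_rank {x : ℝ} (hx : x ≠ 0) : (Zxmat 2 x).rank = 2 := by
  have hdet : (Zxmat 2 x).det = x := by
    simp [det_fin_two, Zxmat]
  have hunit : IsUnit (Zxmat 2 x) := by
    rw [isUnit_iff_isUnit_det, hdet]
    exact hx.isUnit
  rw [rank_of_isUnit _ hunit, Fintype.card_fin]

theorem Zx_rank_two_decomposition_general {n : ℕ} (x : ℝ) (hx : 0 ≤ x) :
    Zxmat n x = vecMulVec (uvec n x) (uvec n x) + x • vecMulVec (vvec n x) (vvec n x) ∧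
    (Zxmat n x).PosSemidef ∧
    (Zxmat n x).rank ≤ 2 ∧
    (0 < x → 2 ≤ n → (Zxmat n x).rank = 2) := by
  refine ⟨Zxmat_eq n x, Zxmat_posSemidef n hx, Zxmat_rank_le_two n x, fun hx0 hn => ?_⟩
  refine (Zxmat_rank_le_two n x).antisymm ?_
  calc 2 = (Zxmat 2 x).rank := (Zxmat_two_rank hx0.ne').symm
    _ = ((Zxmat n x).submatrix (Fin.castLE hn) (Fin.castLE hn)).rank := by
      rw [Zxmat_submatrix_castLE]
    _ ≤ (Zxmat n x).rank := rank_submatrix_le _ _ _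

/-- `Z(x) = u(x)·u(x)ᵀ + x·v(x)·v(x)ᵀ`; hence `Z(x)` is positive semidefinite of rank at
most 2, and of rank exactly 2 when `x > 0` and `n ≥ 2`. -/
theorem Zx_rank_two_decomposition {n : ℕ} (hn : 1 ≤ n) (x : ℝ) (hx : 0 ≤ x) :
    Zxmat n x = vecMulVec (uvec n x) (uvec n x) + x • vecMulVec (vvec n x) (vvec n x) ∧
    (Zxmat n x).PosSemidef ∧
    (Zxmat n x).rank ≤ 2 ∧
    (0 < x → 2 ≤ n → (Zxmat n x).rank = 2) :=
  Zx_rank_two_decomposition_general x hx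
end
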